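/- arXiv:2109.01064 — 9 statements merged into one kernel-verified Lean document; each statement's English description precedes it below -/
import Mathlib

section
/- There exist universal constants K ≥ 1, c₁ > 0, c₂ > 0 such that the following holds. Let μ₀, μ₁, μ₀′, μ₁′ ∈ ℝ with μ₀ ≤ min(μ₁, μ₀′, μ₁′) and μ₀′ ≤ μ₁′, let σ > 0, and let f_{μ₀,μ₁}, f_{μ₀′,μ₁′} be the corresponding one-dimensional mixtures. If [μ₀′, μ₁′] ⊆ [μ₀, μ₁] and σ ≥ K·δ₁, then ‖f_{μ₀,μ₁} − f_{μ₀′,μ₁′}‖_TV ≥ c₁ · min(1, δ₁δ₂/σ²); otherwise (if the containment fails or σ < K·δ₁), ‖f_{μ₀,μ₁} − f_{μ₀′,μ₁′}‖_TV ≥ c₂ · min(1, δ₂/σ). -/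
open MeasureTheory ProbabilityTheory Real
open scoped ENNReal NNReal

/-- Total variation distance: `sup_A (f(A) - f'(A))` over measurable sets `A`. -/
noncomputable def tvDist {Ω : Type*} [MeasurableSpace Ω] (f f' : Measure Ω) : ℝ :=
  ⨆ A : {A : Set Ω // MeasurableSet A}, ((f A.1).toReal - (f' A.1).toReal)

/-- One-dimensional two-component Gaussian mixture with component variance `v`. -/
noncomputable def mix1v (m₀ m₁ : ℝ) (v : ℝ≥0) : Measure ℝ :=
  (1/2 : ℝ≥0∞) • gaussianReal m₀ v + (1/2 : ℝ≥0∞) • gaussianReal m₁ v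

/-- One-dimensional mixture `½·N(μ₀,σ²) + ½·N(μ₁,σ²)`. -/
noncomputable def mix1d (μ₀ μ₁ σ : ℝ) : Measure ℝ :=
  mix1v μ₀ μ₁ ⟨σ^2, sq_nonneg σ⟩



noncomputable def auxV (σ : ℝ) : ℝ≥0 := ⟨σ^2, sq_nonneg σ⟩
noncomputable def auxPdf (σ x : ℝ) : ℝ := gaussianPDFReal 0 (auxV σ) x
noncomputable def auxJ (σ a b : ℝ) : ℝ := ∫ x in a..b, auxPdf σ x
noncomputable def auxPhi (σ t : ℝ) : ℝ := ((gaussianReal 0 (auxV σ)) (Set.Iic t)).toReal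

lemma auxV_ne_zero {σ : ℝ} (hσ : 0 < σ) : auxV σ ≠ 0 := by
  simp only [auxV, ne_eq, ← NNReal.coe_eq_zero, NNReal.coe_mk]
  intro h; exact pow_ne_zero 2 hσ.ne' (congrArg NNReal.toReal h)

lemma auxPdf_eq (σ x : ℝ) :
    auxPdf σ x = (Real.sqrt (2*π*σ^2))⁻¹ * Real.exp (-(x^2)/(2*σ^2)) := by
  simp [auxPdf, gaussianPDFReal, auxV, NNReal.coe_mk]
  rfl

lemma auxPdf_nonneg (σ x : ℝ) : 0 ≤ auxPdf σ x := gaussianPDFReal_nonneg _ _ _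

lemma sqrt_two_pi_le {σ : ℝ} (hσ : 0 < σ) : Real.sqrt (2*π*σ^2) ≤ 2.51*σ := by
  have h : (2*π*σ^2) ≤ (2.51*σ)^2 := by nlinarith [pi_lt_d2, sq_nonneg σ]
  calc Real.sqrt (2*π*σ^2) ≤ Real.sqrt ((2.51*σ)^2) := Real.sqrt_le_sqrt h
  _ = 2.51*σ := Real.sqrt_sq (by positivity)

lemma sqrt_two_pi_pos {σ : ℝ} (hσ : 0 < σ) : 0 < Real.sqrt (2*π*σ^2) := by
  apply Real.sqrt_pos.2; positivity

lemma auxPdf_lb {σ x c : ℝ} (hσ : 0 < σ) (hc : x^2 ≤ c * σ^2) :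
    Real.exp (-c/2) / (2.51*σ) ≤ auxPdf σ x := by
  rw [auxPdf_eq]
  have h1 : Real.exp (-(x^2)/(2*σ^2)) ≥ Real.exp (-c/2) := by
    apply Real.exp_le_exp.2
    rw [div_le_div_iff₀ (by norm_num) (by positivity)]
    nlinarith
  have h2 : (Real.sqrt (2*π*σ^2))⁻¹ ≥ (2.51*σ)⁻¹ := by
    apply inv_anti₀ (sqrt_two_pi_pos hσ) (sqrt_two_pi_le hσ)
  calc Real.exp (-c/2) / (2.51*σ) = (2.51*σ)⁻¹ * Real.exp (-c/2) := by ring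
  _ ≤ (Real.sqrt (2*π*σ^2))⁻¹ * Real.exp (-(x^2)/(2*σ^2)) := by
      apply mul_le_mul h2 h1 (Real.exp_pos _).le (by positivity)

lemma auxPdf_anti {σ x y : ℝ} (hσ : 0 < σ) (hx : 0 ≤ x) (hxy : x ≤ y) :
    auxPdf σ y ≤ auxPdf σ x := by
  rw [auxPdf_eq, auxPdf_eq]
  apply mul_le_mul_of_nonneg_left _ (by positivity)
  apply Real.exp_le_exp.2
  rw [div_le_div_iff₀ (by positivity) (by positivity)]
  nlinarith [pow_le_pow_left₀ hx hxy 2, sq_nonneg σ, hσ]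

-- generic: exp x ≤ c from (exp 1)-power bound
lemma exp_le_of_pow {x c : ℝ} {n : ℕ} (hn : n ≠ 0) (hc : 0 < c)
    (h : Real.exp (n * x) ≤ c ^ n) : Real.exp x ≤ c := by
  by_contra hlt
  push_neg at hlt
  have h1 : c ^ n < Real.exp x ^ n := pow_lt_pow_left₀ hlt hc.le hn
  rw [← Real.exp_nat_mul] at h1
  linarith

lemma exp_nat_le (n : ℕ) : Real.exp n ≤ 2.7182818286 ^ n := by
  rw [← Real.exp_one_pow]
  exact pow_le_pow_left₀ (Real.exp_pos 1).le Real.exp_one_lt_d9.le n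

lemma exp_neg_ge_of_le {x c : ℝ} (hc : 0 < c) (h : Real.exp x ≤ 1 / c) :
    c ≤ Real.exp (-x) := by
  rw [Real.exp_neg, le_inv_comm₀ hc (Real.exp_pos x)]
  simpa [one_div] using h

-- numeric bounds
lemma expb1 : (1:ℝ)/10^20 ≤ Real.exp (-(361/8)) := by
  apply exp_neg_ge_of_le (by norm_num)
  have h : Real.exp (361/8 : ℝ) ≤ Real.exp (46 : ℕ) := by
    apply Real.exp_le_exp.2; norm_num
  refine h.trans ?_
  refine (exp_nat_le 46).trans ?_
  norm_num

lemma expb2 : (1:ℝ)/10^6 ≤ Real.exp (-(25/2)) := by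
  apply exp_neg_ge_of_le (by norm_num)
  have h : Real.exp (25/2 : ℝ) ≤ Real.exp (13 : ℕ) := by
    apply Real.exp_le_exp.2; norm_num
  refine h.trans ?_
  refine (exp_nat_le 13).trans ?_
  norm_num

lemma expb3 : Real.exp (-(1/2) : ℝ) ≤ 2/3 := by
  have h : (3/2 : ℝ) ≤ Real.exp (1/2) := by
    have := Real.add_one_le_exp (1/2 : ℝ); linarith
  rw [Real.exp_neg]
  rw [inv_le_comm₀ (Real.exp_pos _) (by norm_num)]
  linarith

lemma expb4 : (1/2 : ℝ) ≤ Real.exp (-(1/2)) := by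
  have := Real.add_one_le_exp (-(1/2) : ℝ); linarith

lemma expb5 : (7/8 : ℝ) ≤ Real.exp (-(1/8)) := by
  have := Real.add_one_le_exp (-(1/8) : ℝ); linarith

lemma expb6 : (31/100 : ℝ) ≤ Real.exp (-(9/8)) := by
  apply exp_neg_ge_of_le (by norm_num)
  apply exp_le_of_pow (n := 8) (by norm_num) (by norm_num)
  have : ((8:ℕ) * (9/8) : ℝ) = (9:ℕ) := by norm_num
  rw [this]
  refine (exp_nat_le 9).trans ?_
  norm_num

lemma expb7 : (3/25 : ℝ) ≤ Real.exp (-(2:ℝ)) := by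
  apply exp_neg_ge_of_le (by norm_num)
  have : ((2:ℝ)) = ((2:ℕ):ℝ) := by norm_num
  rw [this]
  refine (exp_nat_le 2).trans ?_
  norm_num

lemma auxPdf_diff {σ x s : ℝ} (hσ : 0 < σ) (hx : σ ≤ x) (hs : 0 ≤ s)
    (hxs : x + s ≤ 19/2*σ) :
    (s/σ) * (Real.exp (-(361/8)) / (2.51*σ)) ≤ auxPdf σ x - auxPdf σ (x+s) := by
  rw [auxPdf_eq, auxPdf_eq]
  set C := (Real.sqrt (2*π*σ^2))⁻¹ with hC
  have hCpos : 0 < C := by rw [hC]; exact inv_pos.2 (sqrt_two_pi_pos hσ)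
  have hC2 : (2.51*σ)⁻¹ ≤ C := inv_anti₀ (sqrt_two_pi_pos hσ) (sqrt_two_pi_le hσ)
  set A := x^2/(2*σ^2) with hA
  set B := (x+s)^2/(2*σ^2) with hB
  have hgoalA : -(x^2)/(2*σ^2) = -A := by rw [hA]; ring
  have hgoalB : -((x+s)^2)/(2*σ^2) = -B := by rw [hB]; ring
  rw [hgoalA, hgoalB]
  have hBA : s/σ ≤ B - A := by
    rw [hA, hB, div_sub_div_same, div_le_div_iff₀ hσ (by positivity)]
    nlinarith [mul_nonneg (mul_nonneg hσ.le hs) (sub_nonneg.2 hx), mul_nonneg hσ.le (mul_nonneg hs hs)]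
  have hBle : B ≤ 361/8 := by
    rw [hB, div_le_iff₀ (by positivity)]
    nlinarith
  have h1 : Real.exp (-(361/8)) ≤ Real.exp (-B) := Real.exp_le_exp.2 (by linarith)
  have h2 : B - A ≤ Real.exp (B-A) - 1 := by
    have := Real.add_one_le_exp (B-A); linarith
  have hfact : Real.exp (-A) - Real.exp (-B) = Real.exp (-B) * (Real.exp (B-A) - 1) := by
    rw [mul_sub, ← Real.exp_add]; ring_nf
  calc (s/σ) * (Real.exp (-(361/8)) / (2.51*σ))
      = (2.51*σ)⁻¹ * (Real.exp (-(361/8)) * (s/σ)) := by ring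
    _ ≤ C * (Real.exp (-(361/8)) * (s/σ)) := by
        apply mul_le_mul_of_nonneg_right hC2 (by positivity)
    _ ≤ C * (Real.exp (-B) * (Real.exp (B-A) - 1)) := by
        apply mul_le_mul_of_nonneg_left _ hCpos.le
        apply mul_le_mul h1 (le_trans hBA h2) (by positivity) (Real.exp_pos _).le
    _ = C * Real.exp (-A) - C * Real.exp (-B) := by rw [← hfact]; ring

lemma auxPdf_mid {σ x s : ℝ} (hσ : 0 < σ) (hx : σ ≤ x) (hs : σ/2 ≤ s) :
    auxPdf σ (x+s) ≤ 2/3 * auxPdf σ x := by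
  rw [auxPdf_eq, auxPdf_eq]
  set C := (Real.sqrt (2*π*σ^2))⁻¹ with hC
  have hCpos : 0 < C := by rw [hC]; exact inv_pos.2 (sqrt_two_pi_pos hσ)
  have hkey : Real.exp (-((x+s)^2)/(2*σ^2)) ≤ 2/3 * Real.exp (-(x^2)/(2*σ^2)) := by
    have hsplit : Real.exp (-((x+s)^2)/(2*σ^2)) =
        Real.exp (-(x^2)/(2*σ^2)) * Real.exp ((x^2 - (x+s)^2)/(2*σ^2)) := by
      rw [← Real.exp_add]; ring_nf
    rw [hsplit]
    have h1 : Real.exp ((x^2 - (x+s)^2)/(2*σ^2)) ≤ 2/3 := by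
      refine le_trans (Real.exp_le_exp.2 ?_) expb3
      rw [div_le_iff₀ (by positivity)]
      nlinarith
    nlinarith [Real.exp_pos (-(x^2)/(2*σ^2)), h1, (Real.exp_pos ((x^2 - (x+s)^2)/(2*σ^2))).le]
  calc C * Real.exp (-((x+s)^2)/(2*σ^2)) ≤ C * (2/3 * Real.exp (-(x^2)/(2*σ^2))) :=
        mul_le_mul_of_nonneg_left hkey hCpos.le
    _ = 2/3 * (C * Real.exp (-(x^2)/(2*σ^2))) := by ring

lemma auxPdf_intervalIntegrable (σ a b : ℝ) : IntervalIntegrable (auxPdf σ) volume a b :=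
  (integrable_gaussianPDFReal 0 (auxV σ)).intervalIntegrable

lemma auxPdf_shift_eq (σ s : ℝ) : (fun x => auxPdf σ (x+s)) = gaussianPDFReal (-s) (auxV σ) := by
  funext x
  simp only [auxPdf, gaussianPDFReal]
  ring_nf

lemma auxPdf_shift_intervalIntegrable (σ s a b : ℝ) :
    IntervalIntegrable (fun x => auxPdf σ (x+s)) volume a b := by
  rw [auxPdf_shift_eq]
  exact (integrable_gaussianPDFReal _ _).intervalIntegrable

lemma auxJ_nonneg {σ a b : ℝ} (hab : a ≤ b) : 0 ≤ auxJ σ a b :=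
  intervalIntegral.integral_nonneg hab (fun x _ => auxPdf_nonneg σ x)

lemma auxJ_ge {σ a b m : ℝ} (hab : a ≤ b) (h : ∀ x ∈ Set.Icc a b, m ≤ auxPdf σ x) :
    m * (b - a) ≤ auxJ σ a b := by
  have h2 := intervalIntegral.integral_mono_on hab (intervalIntegrable_const (c := m))
    (auxPdf_intervalIntegrable σ a b) h
  rw [intervalIntegral.integral_const, smul_eq_mul] at h2
  have h0 : auxJ σ a b = ∫ u in a..b, auxPdf σ u := rfl
  rw [h0]; linarith [h2]

lemma auxJ_le {σ a b M : ℝ} (hab : a ≤ b) (h : ∀ x ∈ Set.Icc a b, auxPdf σ x ≤ M) :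
    auxJ σ a b ≤ M * (b - a) := by
  have h2 := intervalIntegral.integral_mono_on hab (auxPdf_intervalIntegrable σ a b)
    (intervalIntegrable_const (c := M)) h
  rw [intervalIntegral.integral_const, smul_eq_mul] at h2
  have h0 : auxJ σ a b = ∫ u in a..b, auxPdf σ u := rfl
  rw [h0]; linarith [h2]

lemma auxJ_add (σ a b c : ℝ) : auxJ σ a b + auxJ σ b c = auxJ σ a c :=
  intervalIntegral.integral_add_adjacent_intervals (auxPdf_intervalIntegrable σ a b)
    (auxPdf_intervalIntegrable σ b c)

lemma auxJ_shift_sub {σ a b s c : ℝ} (hab : a ≤ b)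
    (h : ∀ x ∈ Set.Icc a b, c ≤ auxPdf σ x - auxPdf σ (x+s)) :
    c * (b - a) ≤ auxJ σ a b - auxJ σ (a+s) (b+s) := by
  have h2 : auxJ σ (a+s) (b+s) = ∫ x in a..b, auxPdf σ (x+s) :=
    (intervalIntegral.integral_comp_add_right (auxPdf σ) s).symm
  have h3 : (∫ x in a..b, (auxPdf σ (x+s) + c)) ≤ ∫ x in a..b, auxPdf σ x := by
    apply intervalIntegral.integral_mono_on hab
      ((auxPdf_shift_intervalIntegrable σ s a b).add (intervalIntegrable_const (c := c)))
      (auxPdf_intervalIntegrable σ a b)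
    intro x hx
    have := h x hx; linarith
  rw [intervalIntegral.integral_add (auxPdf_shift_intervalIntegrable σ s a b)
    (intervalIntegrable_const (c := c)), intervalIntegral.integral_const, smul_eq_mul] at h3
  have : auxJ σ a b = ∫ x in a..b, auxPdf σ x := rfl
  rw [this, h2]
  linarith

lemma auxJ_even (σ a b : ℝ) : auxJ σ (-b) (-a) = auxJ σ a b := by
  have h : ∀ x : ℝ, auxPdf σ (-x) = auxPdf σ x := by
    intro x; rw [auxPdf_eq, auxPdf_eq, neg_sq]
  calc auxJ σ (-b) (-a) = ∫ x in (-b)..(-a), auxPdf σ x := rfl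
    _ = ∫ x in a..b, auxPdf σ (-x) := (intervalIntegral.integral_comp_neg (fun x => auxPdf σ x)).symm
    _ = auxJ σ a b := by simp only [h]; rfl

lemma core {σ p q d : ℝ} (hσ : 0 < σ) (hq0 : 0 ≤ q) (hqp : q ≤ p) (hd : 0 ≤ d)
    (hsum : p + q + d ≤ 17/2*σ) :
    1/17 * (p*(p+q+d)/σ) * (Real.exp (-(361/8)) / (2.51*σ)) ≤
      auxJ σ σ (σ+p) - auxJ σ (σ+p+d) (σ+p+d+q) := by
  set E := Real.exp (-(361/8)) / (2.51*σ) with hE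
  have hEpos : 0 < E := by rw [hE]; positivity
  have hp0 : 0 ≤ p := hq0.trans hqp
  have hsplit : auxJ σ σ (σ+p-q) + auxJ σ (σ+p-q) (σ+p) = auxJ σ σ (σ+p) :=
    auxJ_add σ σ (σ+p-q) (σ+p)
  rcases le_or_gt q (p/2) with hcase | hcase
  · -- q small: use drop of mass on [σ, σ+p-q]
    have h1 : E * ((σ+p-q) - σ) ≤ auxJ σ σ (σ+p-q) := by
      apply auxJ_ge (by linarith)
      intro x hx
      have hx1 := hx.1; have hx2 := hx.2
      have hxx : x^2 ≤ (361/4) * σ^2 := by nlinarith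
      have hlb := auxPdf_lb hσ hxx
      have : Real.exp (-(361/4)/2) = Real.exp (-(361/8)) := by norm_num
      rw [this] at hlb
      exact hlb
    have h2 : auxJ σ (σ+p+d) (σ+p+d+q) ≤ auxJ σ (σ+p-q) (σ+p) := by
      have hpt : ∀ x ∈ Set.Icc (σ+p-q) (σ+p),
          (0:ℝ) ≤ auxPdf σ x - auxPdf σ (x+(q+d)) := by
        intro x hx
        have := auxPdf_anti hσ (by linarith [hx.1] : (0:ℝ) ≤ x) (by linarith : x ≤ x+(q+d))
        linarith
      have h2' := auxJ_shift_sub (s := q+d) (by linarith : σ+p-q ≤ σ+p) hpt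
      have e1 : σ+p-q+(q+d) = σ+p+d := by ring
      have e2 : σ+p+(q+d) = σ+p+d+q := by ring
      rw [e1, e2] at h2'
      linarith
    have h3 : 0 ≤ auxJ σ (σ+p-q) (σ+p) := auxJ_nonneg (by linarith)
    have h4 : 1/17 * (p*(p+q+d)/σ) * E ≤ E * (p - q) := by
      have hdiv : p*(p+q+d)/σ ≤ p*(17/2) := by
        rw [div_le_iff₀ hσ]; nlinarith
      nlinarith [mul_le_mul_of_nonneg_right hdiv hEpos.le]
    have : (σ+p-q) - σ = p - q := by ring
    rw [this] at h1
    linarith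
  · -- q large: use the shift difference on [σ+p-q, σ+p]
    have h0 : 0 ≤ auxJ σ σ (σ+p-q) := auxJ_nonneg (by linarith)
    have hpt : ∀ x ∈ Set.Icc (σ+p-q) (σ+p),
        ((q+d)/σ) * E ≤ auxPdf σ x - auxPdf σ (x+(q+d)) := by
      intro x hx
      exact auxPdf_diff hσ (by linarith [hx.1]) (by linarith) (by linarith [hx.2])
    have hkey := auxJ_shift_sub (s := q+d) (by linarith : σ+p-q ≤ σ+p) hpt
    have e1 : σ+p-q+(q+d) = σ+p+d := by ring
    have e2 : σ+p+(q+d) = σ+p+d+q := by ring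
    rw [e1, e2] at hkey
    have e3 : (σ+p) - (σ+p-q) = q := by ring
    rw [e3] at hkey
    have h4 : 1/17 * (p*(p+q+d)/σ) * E ≤ ((q+d)/σ) * E * q := by
      have hp2q : p ≤ 2*q := by linarith
      have hXY : p*(p+q+d) ≤ 17*(q*(q+d)) := by
        nlinarith [mul_le_mul_of_nonneg_right hp2q hp0,
          mul_le_mul_of_nonneg_right hp2q hq0, mul_le_mul_of_nonneg_right hp2q hd,
          mul_nonneg hq0 hd, sq_nonneg q]
      have hFpos : (0:ℝ) ≤ E/σ := by positivity
      have hmul := mul_le_mul_of_nonneg_right hXY hFpos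
      have e1' : 1/17*(p*(p+q+d)/σ)*E = p*(p+q+d)*(E/σ)*(1/17) := by ring
      have e2' : (q+d)/σ*E*q = q*(q+d)*(E/σ) := by ring
      rw [e1', e2']
      linarith
    linarith

lemma mid {σ p q d : ℝ} (hσ : 0 < σ) (hq0 : 0 ≤ q) (hqp : q ≤ p) (hp4 : p ≤ 4*σ)
    (hd : σ/2 ≤ d) :
    1/3 * p * (Real.exp (-(25/2)) / (2.51*σ)) ≤
      auxJ σ σ (σ+p) - auxJ σ (σ+p+d) (σ+p+d+q) := by
  have hp0 : 0 ≤ p := hq0.trans hqp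
  set P := auxPdf σ (σ+p) with hP
  have hPpos : 0 ≤ P := auxPdf_nonneg σ _
  have h1 : P * ((σ+p) - σ) ≤ auxJ σ σ (σ+p) := by
    apply auxJ_ge (by linarith)
    intro x hx
    exact auxPdf_anti hσ (by linarith [hx.1]) hx.2
  have h2 : auxJ σ (σ+p+d) (σ+p+d+q) ≤ auxPdf σ (σ+p+d) * ((σ+p+d+q) - (σ+p+d)) := by
    apply auxJ_le (by linarith)
    intro x hx
    exact auxPdf_anti hσ (by linarith) hx.1
  have h3 : auxPdf σ (σ+p+d) ≤ 2/3 * P := by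
    have := auxPdf_mid hσ (by linarith : σ ≤ σ+p) hd
    convert this using 3 <;> ring
  have h4 : Real.exp (-(25/2)) / (2.51*σ) ≤ P := by
    have hxx : (σ+p)^2 ≤ 25 * σ^2 := by nlinarith
    have hlb := auxPdf_lb hσ hxx
    have : Real.exp (-(25:ℝ)/2) = Real.exp (-(25/2)) := by norm_num
    rw [this] at hlb
    exact hlb
  have e1 : (σ+p) - σ = p := by ring
  have e2 : (σ+p+d+q) - (σ+p+d) = q := by ring
  rw [e1] at h1; rw [e2] at h2
  have h5 : auxPdf σ (σ+p+d) * q ≤ 2/3 * P * q :=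
    mul_le_mul_of_nonneg_right h3 hq0
  have h6 : 1/3 * p * (Real.exp (-(25/2)) / (2.51*σ)) ≤ 1/3 * p * P := by
    apply mul_le_mul_of_nonneg_left h4 (by positivity)
  nlinarith [mul_le_mul_of_nonneg_left hqp hPpos]

lemma jb1 {σ r : ℝ} (hσ : 0 < σ) (hr : 0 ≤ r) : 1/6 * min 1 (r/σ) ≤ auxJ σ 0 r := by
  set m := min r σ with hm
  have hm0 : 0 ≤ m := le_min hr hσ.le
  have hmr : m ≤ r := min_le_left _ _
  have hsplit : auxJ σ 0 m + auxJ σ m r = auxJ σ 0 r := auxJ_add σ 0 m r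
  have h2 : 0 ≤ auxJ σ m r := auxJ_nonneg hmr
  have h1 : Real.exp (-(1/2)) / (2.51*σ) * (m - 0) ≤ auxJ σ 0 m := by
    apply auxJ_ge hm0
    intro x hx
    have hxx : x^2 ≤ 1 * σ^2 := by
      have := hx.1; have h2' := hx.2
      have : x ≤ σ := le_trans h2' (min_le_right r σ)
      nlinarith [hx.1]
    have hlb := auxPdf_lb hσ hxx
    have : Real.exp (-(1:ℝ)/2) = Real.exp (-(1/2)) := by norm_num
    rw [this] at hlb
    exact hlb
  have hmin : min 1 (r/σ) = m / σ := by
    rw [hm, ← min_div_div_right hσ.le r σ, div_self hσ.ne', min_comm]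
  rw [hmin]
  have h3 : 1/6 * (m/σ) ≤ Real.exp (-(1/2)) / (2.51*σ) * (m - 0) := by
    have key : (1/2) * (m/(2.51*σ)) ≤ Real.exp (-(1/2)) * (m/(2.51*σ)) :=
      mul_le_mul_of_nonneg_right expb4 (by positivity)
    have e1 : Real.exp (-(1/2)) / (2.51*σ) * (m - 0) = Real.exp (-(1/2)) * (m/(2.51*σ)) := by
      ring
    rw [e1]
    have e2 : 1/6 * (m/σ) ≤ 1/2 * (m/(2.51*σ)) := by
      rw [show 1/6 * (m/σ) = m/(6*σ) by ring, show 1/2 * (m/(2.51*σ)) = m/(5.02*σ) by ring]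
      apply div_le_div_of_nonneg_left hm0 (by positivity) (by linarith)
    linarith
  linarith

lemma pieceHalf {σ u w cc ee : ℝ} (hσ : 0 < σ) (hw : w - u = σ/2)
    (hx : ∀ x ∈ Set.Icc u w, x^2 ≤ cc*σ^2) (he : ee ≤ Real.exp (-cc/2)) (hee : 0 ≤ ee) :
    ee/5.02 ≤ auxJ σ u w := by
  have huw : u ≤ w := by linarith
  have h1 : Real.exp (-cc/2) / (2.51*σ) * (w - u) ≤ auxJ σ u w := by
    apply auxJ_ge huw
    intro x hx'
    exact auxPdf_lb hσ (hx x hx')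
  rw [hw] at h1
  have e1 : Real.exp (-cc/2) / (2.51*σ) * (σ/2) = Real.exp (-cc/2) / 5.02 := by
    field_simp; ring
  rw [e1] at h1
  have : ee/5.02 ≤ Real.exp (-cc/2)/5.02 := by gcongr
  linarith

lemma wbound {σ : ℝ} (hσ : 0 < σ) : 0.71 ≤ auxJ σ (-(2*σ)) (2*σ) := by
  have p1 : (3/25:ℝ)/5.02 ≤ auxJ σ (-(2*σ)) (-(3/2*σ)) := by
    apply pieceHalf (cc := 4) hσ (by ring)
      (fun x hx => by nlinarith [hx.1, hx.2, hσ]) _ (by norm_num)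
    rw [show (-(4:ℝ)/2) = -(2:ℝ) by norm_num]
    exact expb7
  have p2 : (31/100:ℝ)/5.02 ≤ auxJ σ (-(3/2*σ)) (-(1*σ)) := by
    apply pieceHalf (cc := 9/4) hσ (by ring)
      (fun x hx => by nlinarith [hx.1, hx.2, hσ]) _ (by norm_num)
    rw [show (-(9/4:ℝ)/2) = -(9/8) by norm_num]
    exact expb6
  have p3 : (1/2:ℝ)/5.02 ≤ auxJ σ (-(1*σ)) (-(1/2*σ)) := by
    apply pieceHalf (cc := 1) hσ (by ring)
      (fun x hx => by nlinarith [hx.1, hx.2, hσ]) _ (by norm_num)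
    rw [show (-(1:ℝ)/2) = -(1/2) by norm_num]
    exact expb4
  have p4 : (7/8:ℝ)/5.02 ≤ auxJ σ (-(1/2*σ)) (0) := by
    apply pieceHalf (cc := 1/4) hσ (by ring)
      (fun x hx => by nlinarith [hx.1, hx.2, hσ]) _ (by norm_num)
    rw [show (-(1/4:ℝ)/2) = -(1/8) by norm_num]
    exact expb5
  have p5 : (7/8:ℝ)/5.02 ≤ auxJ σ (0) (1/2*σ) := by
    apply pieceHalf (cc := 1/4) hσ (by ring)
      (fun x hx => by nlinarith [hx.1, hx.2, hσ]) _ (by norm_num)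
    rw [show (-(1/4:ℝ)/2) = -(1/8) by norm_num]
    exact expb5
  have p6 : (1/2:ℝ)/5.02 ≤ auxJ σ (1/2*σ) (1*σ) := by
    apply pieceHalf (cc := 1) hσ (by ring)
      (fun x hx => by nlinarith [hx.1, hx.2, hσ]) _ (by norm_num)
    rw [show (-(1:ℝ)/2) = -(1/2) by norm_num]
    exact expb4
  have p7 : (31/100:ℝ)/5.02 ≤ auxJ σ (1*σ) (3/2*σ) := by
    apply pieceHalf (cc := 9/4) hσ (by ring)
      (fun x hx => by nlinarith [hx.1, hx.2, hσ]) _ (by norm_num)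
    rw [show (-(9/4:ℝ)/2) = -(9/8) by norm_num]
    exact expb6
  have p8 : (3/25:ℝ)/5.02 ≤ auxJ σ (3/2*σ) (2*σ) := by
    apply pieceHalf (cc := 4) hσ (by ring)
      (fun x hx => by nlinarith [hx.1, hx.2, hσ]) _ (by norm_num)
    rw [show (-(4:ℝ)/2) = -(2:ℝ) by norm_num]
    exact expb7
  have a1 := auxJ_add σ (-(2*σ)) (-(3/2*σ)) (2*σ)
  have a2 := auxJ_add σ (-(3/2*σ)) (-(1*σ)) (2*σ)
  have a3 := auxJ_add σ (-(1*σ)) (-(1/2*σ)) (2*σ)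
  have a4 := auxJ_add σ (-(1/2*σ)) 0 (2*σ)
  have a5 := auxJ_add σ 0 (1/2*σ) (2*σ)
  have a6 := auxJ_add σ (1/2*σ) (1*σ) (2*σ)
  have a7 := auxJ_add σ (1*σ) (3/2*σ) (2*σ)
  linarith

lemma auxPhi_eq {σ : ℝ} (hσ : 0 < σ) (t : ℝ) :
    auxPhi σ t = ∫ x in Set.Iic t, auxPdf σ x := by
  rw [auxPhi, gaussianReal_apply_eq_integral 0 (auxV_ne_zero hσ),
    ENNReal.toReal_ofReal (setIntegral_nonneg measurableSet_Iic
      (fun x _ => gaussianPDFReal_nonneg 0 (auxV σ) x))]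
  rfl

lemma auxPhi_sub {σ a b : ℝ} (hσ : 0 < σ) : auxPhi σ b - auxPhi σ a = auxJ σ a b := by
  rw [auxPhi_eq hσ, auxPhi_eq hσ]
  exact intervalIntegral.integral_Iic_sub_Iic
    ((integrable_gaussianPDFReal 0 (auxV σ)).integrableOn)
    ((integrable_gaussianPDFReal 0 (auxV σ)).integrableOn)

lemma auxPhi_nonneg (σ t : ℝ) : 0 ≤ auxPhi σ t := ENNReal.toReal_nonneg

lemma auxPhi_le_one (σ t : ℝ) : auxPhi σ t ≤ 1 := by
  rw [auxPhi]
  have h : (gaussianReal 0 (auxV σ)) (Set.Iic t) ≤ 1 := prob_le_one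
  exact ENNReal.toReal_le_of_le_ofReal one_pos.le (by simpa using h)

lemma auxPhi_mono {σ a b : ℝ} (hσ : 0 < σ) (hab : a ≤ b) : auxPhi σ a ≤ auxPhi σ b := by
  have h1 := auxPhi_sub (a := a) (b := b) hσ
  have h2 := auxJ_nonneg (σ := σ) hab
  linarith

lemma auxJ_le_auxPhi {σ a b : ℝ} (hσ : 0 < σ) : auxJ σ a b ≤ auxPhi σ b := by
  have h1 := auxPhi_sub (a := a) (b := b) hσ
  have h2 := auxPhi_nonneg σ a
  linarith

lemma auxPhi_le_one_sub {σ a b : ℝ} (hσ : 0 < σ) : auxPhi σ a ≤ 1 - auxJ σ a b := by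
  have h1 := auxPhi_sub (a := a) (b := b) hσ
  have h2 := auxPhi_le_one σ b
  linarith

lemma gauss_Iic {σ : ℝ} (hσ : 0 < σ) (μ t : ℝ) :
    ((gaussianReal μ (auxV σ)) (Set.Iic t)).toReal = auxPhi σ (t - μ) := by
  have hmap : gaussianReal μ (auxV σ) = Measure.map (· + μ) (gaussianReal 0 (auxV σ)) := by
    rw [gaussianReal_map_add_const, zero_add]
  rw [hmap, Measure.map_apply (measurable_add_const μ) measurableSet_Iic]
  have hpre : ((· + μ) ⁻¹' (Set.Iic t) : Set ℝ) = Set.Iic (t - μ) := by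
    ext x; simp only [Set.mem_preimage, Set.mem_Iic]
    constructor <;> intro h <;> linarith
  rw [hpre]
  rfl

instance mix1d_prob (μ₀ μ₁ σ : ℝ) : IsProbabilityMeasure (mix1d μ₀ μ₁ σ) := by
  constructor
  unfold mix1d mix1v
  haveI := ProbabilityTheory.instIsProbabilityMeasureGaussianReal μ₀ ⟨σ^2, sq_nonneg σ⟩
  haveI := ProbabilityTheory.instIsProbabilityMeasureGaussianReal μ₁ ⟨σ^2, sq_nonneg σ⟩
  simp only [Measure.add_apply, Measure.smul_apply, smul_eq_mul, measure_univ, mul_one]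
  exact ENNReal.add_halves 1

lemma auxV_eq (σ : ℝ) : (⟨σ^2, sq_nonneg σ⟩ : ℝ≥0) = auxV σ := rfl

lemma mix_Iic {σ : ℝ} (hσ : 0 < σ) (μ₀ μ₁ t : ℝ) :
    ((mix1d μ₀ μ₁ σ) (Set.Iic t)).toReal = (auxPhi σ (t - μ₀) + auxPhi σ (t - μ₁))/2 := by
  unfold mix1d mix1v
  rw [auxV_eq]
  rw [Measure.add_apply, Measure.smul_apply, Measure.smul_apply, smul_eq_mul, smul_eq_mul]
  rw [ENNReal.toReal_add
    (ENNReal.mul_ne_top (by norm_num) (measure_ne_top _ _))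
    (ENNReal.mul_ne_top (by norm_num) (measure_ne_top _ _))]
  rw [ENNReal.toReal_mul, ENNReal.toReal_mul, gauss_Iic hσ, gauss_Iic hσ]
  norm_num
  ring

lemma tvDist_ge {Ω : Type*} [MeasurableSpace Ω] (f f' : Measure Ω) [IsProbabilityMeasure f]
    {A : Set Ω} (hA : MeasurableSet A) :
    (f A).toReal - (f' A).toReal ≤ tvDist f f' := by
  have hbdd : BddAbove (Set.range fun A : {A : Set Ω // MeasurableSet A} =>
      ((f A.1).toReal - (f' A.1).toReal)) := by
    refine ⟨1, ?_⟩
    rintro x ⟨B, rfl⟩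
    have h1 : (f B.1).toReal ≤ 1 := by
      have h : f B.1 ≤ 1 := prob_le_one
      exact ENNReal.toReal_le_of_le_ofReal one_pos.le (by simpa using h)
    have h2 : 0 ≤ (f' B.1).toReal := ENNReal.toReal_nonneg
    simp only
    linarith
  exact le_ciSup hbdd ⟨A, hA⟩

lemma tv_lower_Iic {σ : ℝ} (hσ : 0 < σ) (μ₀ μ₁ μ₀' μ₁' t : ℝ) :
    (auxPhi σ (t - μ₀) + auxPhi σ (t - μ₁))/2 - (auxPhi σ (t - μ₀') + auxPhi σ (t - μ₁'))/2 ≤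
      tvDist (mix1d μ₀ μ₁ σ) (mix1d μ₀' μ₁' σ) := by
  have h := tvDist_ge (mix1d μ₀ μ₁ σ) (mix1d μ₀' μ₁' σ) (measurableSet_Iic (a := t))
  rw [mix_Iic hσ, mix_Iic hσ] at h
  exact h

lemma tv_lower_Ici {σ : ℝ} (hσ : 0 < σ) (μ₀ μ₁ μ₀' μ₁' t : ℝ) :
    (auxPhi σ (t - μ₀') + auxPhi σ (t - μ₁'))/2 - (auxPhi σ (t - μ₀) + auxPhi σ (t - μ₁))/2 ≤
      tvDist (mix1d μ₀ μ₁ σ) (mix1d μ₀' μ₁' σ) := by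
  have h := tvDist_ge (mix1d μ₀ μ₁ σ) (mix1d μ₀' μ₁' σ)
    (measurableSet_Iic (a := t)).compl
  have hc : ∀ (m₀ m₁ : ℝ), ((mix1d m₀ m₁ σ) (Set.Iic t)ᶜ).toReal =
      1 - ((mix1d m₀ m₁ σ) (Set.Iic t)).toReal := by
    intro m₀ m₁
    rw [prob_compl_eq_one_sub measurableSet_Iic,
      ENNReal.toReal_sub_of_le prob_le_one ENNReal.one_ne_top]
    simp
  rw [hc, hc, mix_Iic hσ, mix_Iic hσ] at h
  linarith

lemma bridge_left {σ μ₀ a d b : ℝ} (hσ : 0 < σ) (ha : 0 ≤ a) (hd : 0 ≤ d) (hb : 0 ≤ b) :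
    (auxJ σ σ (σ+a) - auxJ σ (σ+a+d) (σ+a+d+b))/2 ≤
      tvDist (mix1d μ₀ (μ₀+(a+d+b)) σ) (mix1d (μ₀+a) (μ₀+(a+d)) σ) := by
  have h := tv_lower_Iic hσ μ₀ (μ₀+(a+d+b)) (μ₀+a) (μ₀+(a+d)) (μ₀-σ)
  rw [show μ₀-σ-μ₀ = -σ by ring, show μ₀-σ-(μ₀+(a+d+b)) = -(σ+a+d+b) by ring,
    show μ₀-σ-(μ₀+a) = -(σ+a) by ring, show μ₀-σ-(μ₀+(a+d)) = -(σ+a+d) by ring] at h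
  have hA : auxPhi σ (-σ) - auxPhi σ (-(σ+a)) = auxJ σ σ (σ+a) := by
    rw [auxPhi_sub hσ, auxJ_even]
  have hB : auxPhi σ (-(σ+a+d)) - auxPhi σ (-(σ+a+d+b)) = auxJ σ (σ+a+d) (σ+a+d+b) := by
    rw [auxPhi_sub hσ, auxJ_even]
  linarith

lemma bridge_right {σ μ₀ a d b : ℝ} (hσ : 0 < σ) (ha : 0 ≤ a) (hd : 0 ≤ d) (hb : 0 ≤ b) :
    (auxJ σ σ (σ+b) - auxJ σ (σ+b+d) (σ+b+d+a))/2 ≤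
      tvDist (mix1d μ₀ (μ₀+(a+d+b)) σ) (mix1d (μ₀+a) (μ₀+(a+d)) σ) := by
  have h := tv_lower_Ici hσ μ₀ (μ₀+(a+d+b)) (μ₀+a) (μ₀+(a+d)) (μ₀+(a+d+b)+σ)
  rw [show μ₀+(a+d+b)+σ-μ₀ = σ+b+d+a by ring,
    show μ₀+(a+d+b)+σ-(μ₀+(a+d+b)) = σ by ring,
    show μ₀+(a+d+b)+σ-(μ₀+a) = σ+b+d by ring,
    show μ₀+(a+d+b)+σ-(μ₀+(a+d)) = σ+b by ring] at h
  have hA : auxPhi σ (σ+b) - auxPhi σ σ = auxJ σ σ (σ+b) := auxPhi_sub hσ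
  have hB : auxPhi σ (σ+b+d+a) - auxPhi σ (σ+b+d) = auxJ σ (σ+b+d) (σ+b+d+a) :=
    auxPhi_sub hσ
  linarith

lemma bridge_sep_left {σ μ₀ a d b : ℝ} (hσ : 0 < σ) (ha : 4*σ ≤ a) (hd : 0 ≤ d) (hb : 0 ≤ b) :
    3/2 * auxJ σ (-(2*σ)) (2*σ) - 1 ≤
      tvDist (mix1d μ₀ (μ₀+(a+d+b)) σ) (mix1d (μ₀+a) (μ₀+(a+d)) σ) := by
  set W := auxJ σ (-(2*σ)) (2*σ) with hW
  have h := tv_lower_Iic hσ μ₀ (μ₀+(a+d+b)) (μ₀+a) (μ₀+(a+d)) (μ₀+2*σ)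
  rw [show μ₀+2*σ-μ₀ = 2*σ by ring, show μ₀+2*σ-(μ₀+(a+d+b)) = 2*σ-(a+d+b) by ring,
    show μ₀+2*σ-(μ₀+a) = 2*σ-a by ring, show μ₀+2*σ-(μ₀+(a+d)) = 2*σ-(a+d) by ring] at h
  have c1 : W ≤ auxPhi σ (2*σ) := auxJ_le_auxPhi hσ
  have c2 : auxPhi σ (2*σ-a) ≤ 1 - W := by
    have := auxPhi_mono hσ (show 2*σ-a ≤ -(2*σ) by linarith)
    have := auxPhi_le_one_sub (a := -(2*σ)) (b := 2*σ) hσ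
    linarith
  have c3 : auxPhi σ (2*σ-(a+d)) ≤ 1 - W := by
    have := auxPhi_mono hσ (show 2*σ-(a+d) ≤ -(2*σ) by linarith)
    have := auxPhi_le_one_sub (a := -(2*σ)) (b := 2*σ) hσ
    linarith
  have c4 : 0 ≤ auxPhi σ (2*σ-(a+d+b)) := auxPhi_nonneg _ _
  linarith

lemma bridge_sep_right {σ μ₀ a d b : ℝ} (hσ : 0 < σ) (ha : 0 ≤ a) (hd : 0 ≤ d) (hb : 4*σ ≤ b) :
    3/2 * auxJ σ (-(2*σ)) (2*σ) - 1 ≤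
      tvDist (mix1d μ₀ (μ₀+(a+d+b)) σ) (mix1d (μ₀+a) (μ₀+(a+d)) σ) := by
  set W := auxJ σ (-(2*σ)) (2*σ) with hW
  have h := tv_lower_Ici hσ μ₀ (μ₀+(a+d+b)) (μ₀+a) (μ₀+(a+d)) (μ₀+(a+d+b)-2*σ)
  rw [show μ₀+(a+d+b)-2*σ-μ₀ = a+d+b-2*σ by ring,
    show μ₀+(a+d+b)-2*σ-(μ₀+(a+d+b)) = -(2*σ) by ring,
    show μ₀+(a+d+b)-2*σ-(μ₀+a) = d+b-2*σ by ring,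
    show μ₀+(a+d+b)-2*σ-(μ₀+(a+d)) = b-2*σ by ring] at h
  have c0 : W ≤ auxPhi σ (2*σ) := auxJ_le_auxPhi hσ
  have c1 : W ≤ auxPhi σ (b-2*σ) := by
    have := auxPhi_mono hσ (show 2*σ ≤ b-2*σ by linarith)
    linarith
  have c2 : W ≤ auxPhi σ (d+b-2*σ) := by
    have := auxPhi_mono hσ (show 2*σ ≤ d+b-2*σ by linarith)
    linarith
  have c3 : auxPhi σ (-(2*σ)) ≤ 1 - W := auxPhi_le_one_sub (a := -(2*σ)) (b := 2*σ) hσ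
  have c4 : auxPhi σ (a+d+b-2*σ) ≤ 1 := auxPhi_le_one _ _
  linarith

lemma bridge_b1 {σ μ₀ μ₁ μ₀' μ₁' : ℝ} (hσ : 0 < σ) (t : ℝ) :
    (auxJ σ (t-μ₀') (t-μ₀) + auxJ σ (t-μ₁') (t-μ₁))/2 ≤
      tvDist (mix1d μ₀ μ₁ σ) (mix1d μ₀' μ₁' σ) := by
  have h := tv_lower_Iic hσ μ₀ μ₁ μ₀' μ₁' t
  have hA : auxPhi σ (t-μ₀) - auxPhi σ (t-μ₀') = auxJ σ (t-μ₀') (t-μ₀) := auxPhi_sub hσ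
  have hB : auxPhi σ (t-μ₁) - auxPhi σ (t-μ₁') = auxJ σ (t-μ₁') (t-μ₁) := auxPhi_sub hσ
  linarith

lemma alg1 {σ X : ℝ} (hσ : 0 < σ) (hX : 0 ≤ X) :
    1/10^24 * (X/σ^2) ≤ 1/17 * (X/σ) * (Real.exp (-(361/8))/(2.51*σ)) / 2 := by
  have hE := expb1
  have h1 : 1/10^24 * (X/σ^2) ≤ X*(1/10^20)/(85.34*σ^2) := by
    rw [show 1/10^24 * (X/σ^2) = X/(10^24*σ^2) by ring,
      show X*(1/10^20)/(85.34*σ^2) = X/(85.34*10^20*σ^2) by ring]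
    apply div_le_div_of_nonneg_left hX (by positivity) (by nlinarith [sq_nonneg σ])
  have h2 : X*(1/10^20)/(85.34*σ^2) ≤ X*Real.exp (-(361/8))/(85.34*σ^2) := by gcongr
  have h3 : X*Real.exp (-(361/8))/(85.34*σ^2) =
      1/17 * (X/σ) * (Real.exp (-(361/8))/(2.51*σ)) / 2 := by
    rw [div_eq_div_iff (by positivity) (by norm_num : (2:ℝ) ≠ 0)]
    field_simp
    ring
  linarith

lemma alg2 {σ X : ℝ} (hσ : 0 < σ) (hX : 0 ≤ X) :
    1/10^24 * (X/σ) ≤ 1/3 * X * (Real.exp (-(25/2))/(2.51*σ)) / 2 := by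
  have hE := expb2
  have h1 : 1/10^24 * (X/σ) ≤ X*(1/10^6)/(15.06*σ) := by
    rw [show 1/10^24 * (X/σ) = X/(10^24*σ) by ring,
      show X*(1/10^6)/(15.06*σ) = X/(15.06*10^6*σ) by ring]
    apply div_le_div_of_nonneg_left hX (by positivity) (by nlinarith)
  have h2 : X*(1/10^6)/(15.06*σ) ≤ X*Real.exp (-(25/2))/(15.06*σ) := by gcongr
  have h3 : X*Real.exp (-(25/2))/(15.06*σ) =
      1/3 * X * (Real.exp (-(25/2))/(2.51*σ)) / 2 := by
    rw [div_eq_div_iff (by positivity) (by norm_num : (2:ℝ) ≠ 0)]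
    field_simp
    ring
  linarith

lemma alg3 {σ X : ℝ} (hσ : 0 < σ) (hX : σ^2/4 ≤ X) :
    (1:ℝ)/10^24 ≤ 1/17 * (X/σ) * (Real.exp (-(361/8))/(2.51*σ)) / 2 := by
  have hE := expb1
  have hd1 : (σ^2/4)/σ ≤ X/σ := div_le_div_of_nonneg_right hX hσ.le
  have hd2 : ((1:ℝ)/10^20)/(2.51*σ) ≤ Real.exp (-(361/8))/(2.51*σ) :=
    div_le_div_of_nonneg_right hE (by positivity)
  have h1 : 1/17 * ((σ^2/4)/σ) * ((1/10^20)/(2.51*σ)) / 2 ≤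
      1/17 * (X/σ) * (Real.exp (-(361/8))/(2.51*σ)) / 2 := by
    apply div_le_div_of_nonneg_right _ (by norm_num : (0:ℝ) ≤ 2)
    have hXpos : (0:ℝ) ≤ X := le_trans (by positivity) hX
    apply mul_le_mul (mul_le_mul_of_nonneg_left hd1 (by norm_num)) hd2
      (by positivity) (mul_nonneg (by norm_num) (div_nonneg hXpos hσ.le))
  have h2 : 1/17 * ((σ^2/4)/σ) * ((1/10^20)/(2.51*σ)) / 2 = 1/(341.36*10^20) := by
    rw [eq_div_iff (by norm_num : (341.36:ℝ)*10^20 ≠ 0)]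
    field_simp
    ring
  rw [h2] at h1
  refine le_trans (by norm_num) h1

lemma nested_case1 {σ μ₀ a d b : ℝ} (hσ : 0 < σ) (ha : 0 ≤ a) (hd : 0 ≤ d) (hb : 0 ≤ b)
    (hδ : a + d + b ≤ σ) :
    1/10^24 * ((a+d+b) * max a b / σ^2) ≤
      tvDist (mix1d μ₀ (μ₀+(a+d+b)) σ) (mix1d (μ₀+a) (μ₀+(a+d)) σ) := by
  rcases le_total b a with hba | hab
  · rw [max_eq_left hba]
    have hc := core hσ hb hba hd (by linarith)
    have hbr := bridge_left (μ₀ := μ₀) hσ ha hd hb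
    have halg := alg1 (σ := σ) hσ (mul_nonneg ha (by linarith : (0:ℝ) ≤ a+b+d))
    rw [show (a+d+b) * a / σ^2 = a*(a+b+d)/σ^2 by ring]
    set X := a*(a+b+d) with hX
    linarith
  · rw [max_eq_right hab]
    have hc := core hσ ha hab hd (by linarith)
    have hbr := bridge_right (μ₀ := μ₀) hσ ha hd hb
    have halg := alg1 (σ := σ) hσ (mul_nonneg hb (by linarith : (0:ℝ) ≤ b+a+d))
    rw [show (a+d+b) * b / σ^2 = b*(b+a+d)/σ^2 by ring]
    set X := b*(b+a+d) with hX
    linarith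

lemma nested_case2 {σ μ₀ a d b : ℝ} (hσ : 0 < σ) (ha : 0 ≤ a) (hd : 0 ≤ d) (hb : 0 ≤ b)
    (hδ : σ < a + d + b) :
    1/10^24 * min 1 (max a b / σ) ≤
      tvDist (mix1d μ₀ (μ₀+(a+d+b)) σ) (mix1d (μ₀+a) (μ₀+(a+d)) σ) := by
  have hmaxnn : 0 ≤ max a b / σ := div_nonneg (le_trans ha (le_max_left a b)) hσ.le
  have hmin1 : min 1 (max a b / σ) ≤ 1 := min_le_left _ _
  have hminnn : 0 ≤ min 1 (max a b / σ) := le_min zero_le_one hmaxnn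
  have hminmax : min 1 (max a b / σ) ≤ max a b / σ := min_le_right _ _
  rcases le_total b a with hba | hab
  · rw [max_eq_left hba] at hmin1 hminnn hminmax ⊢
    rcases le_or_gt (4*σ) a with h4 | h4
    · -- well separated
      have hbr := bridge_sep_left (μ₀ := μ₀) hσ h4 hd hb
      have hw := wbound hσ
      nlinarith
    · rcases le_or_gt (σ/2) d with hd2 | hd2
      · -- mid case
        have hm := mid hσ hb hba h4.le hd2
        have hbr := bridge_left (μ₀ := μ₀) hσ ha hd hb
        have halg := alg2 (σ := σ) hσ ha
        have : 1/10^24 * min 1 (a/σ) ≤ 1/10^24 * (a/σ) := by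
          apply mul_le_mul_of_nonneg_left hminmax (by norm_num)
        linarith
      · -- core case, a > σ/4
        have haq : σ/4 < a := by linarith
        have hc := core hσ hb hba hd (by linarith)
        have hbr := bridge_left (μ₀ := μ₀) hσ ha hd hb
        have hXlb : σ^2/4 ≤ a*(a+b+d) := by nlinarith
        have halg := alg3 hσ hXlb
        have : 1/10^24 * min 1 (a/σ) ≤ 1/10^24 * 1 := by
          apply mul_le_mul_of_nonneg_left (min_le_left _ _) (by norm_num)
        set X := a*(a+b+d) with hX
        linarith
  · rw [max_eq_right hab] at hmin1 hminnn hminmax ⊢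
    rcases le_or_gt (4*σ) b with h4 | h4
    · have hbr := bridge_sep_right (μ₀ := μ₀) hσ ha hd h4
      have hw := wbound hσ
      nlinarith
    · rcases le_or_gt (σ/2) d with hd2 | hd2
      · have hm := mid hσ ha hab h4.le hd2
        have hbr := bridge_right (μ₀ := μ₀) hσ ha hd hb
        have halg := alg2 (σ := σ) hσ hb
        have : 1/10^24 * min 1 (b/σ) ≤ 1/10^24 * (b/σ) := by
          apply mul_le_mul_of_nonneg_left hminmax (by norm_num)
        linarith
      · have hbq : σ/4 < b := by linarith
        have hc := core hσ ha hab hd (by linarith)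
        have hbr := bridge_right (μ₀ := μ₀) hσ ha hd hb
        have hXlb : σ^2/4 ≤ b*(b+a+d) := by nlinarith
        have halg := alg3 hσ hXlb
        have : 1/10^24 * min 1 (b/σ) ≤ 1/10^24 * 1 := by
          apply mul_le_mul_of_nonneg_left (min_le_left _ _) (by norm_num)
        set X := b*(b+a+d) with hX
        linarith


theorem stmt_1 :
    ∃ K c₁ c₂ : ℝ, 1 ≤ K ∧ 0 < c₁ ∧ 0 < c₂ ∧
    ∀ μ₀ μ₁ μ₀' μ₁' σ : ℝ, 0 < σ →
      μ₀ ≤ min μ₁ (min μ₀' μ₁') → μ₀' ≤ μ₁' →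
      (Set.Icc μ₀' μ₁' ⊆ Set.Icc μ₀ μ₁ ∧ K * max |μ₀ - μ₁| |μ₀' - μ₁'| ≤ σ →
        tvDist (mix1d μ₀ μ₁ σ) (mix1d μ₀' μ₁' σ) ≥
          c₁ * min 1 (max |μ₀ - μ₁| |μ₀' - μ₁'| * max |μ₀' - μ₀| |μ₁ - μ₁'| / σ^2)) ∧
      (¬(Set.Icc μ₀' μ₁' ⊆ Set.Icc μ₀ μ₁ ∧ K * max |μ₀ - μ₁| |μ₀' - μ₁'| ≤ σ) →
        tvDist (mix1d μ₀ μ₁ σ) (mix1d μ₀' μ₁' σ) ≥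
          c₂ * min 1 (max |μ₀' - μ₀| |μ₁ - μ₁'| / σ)) := by
  refine ⟨1, 1/10^24, 1/10^24, le_refl 1, by norm_num, by norm_num, ?_⟩
  intro μ₀ μ₁ μ₀' μ₁' σ hσ hmin h01
  have h0a : μ₀ ≤ μ₁ := le_trans hmin (min_le_left _ _)
  have h0b : μ₀ ≤ μ₀' := le_trans hmin (le_trans (min_le_right _ _) (min_le_left _ _))
  have h0c : μ₀ ≤ μ₁' := le_trans hmin (le_trans (min_le_right _ _) (min_le_right _ _))
  have habs1 : |μ₀ - μ₁| = μ₁ - μ₀ := by rw [abs_sub_comm]; exact abs_of_nonneg (by linarith)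
  have habs2 : |μ₀' - μ₁'| = μ₁' - μ₀' := by
    rw [abs_sub_comm]; exact abs_of_nonneg (by linarith)
  have habs3 : |μ₀' - μ₀| = μ₀' - μ₀ := abs_of_nonneg (by linarith)
  constructor
  · rintro ⟨hsub, hK⟩
    have hm2 : μ₁' ∈ Set.Icc μ₀ μ₁ := hsub ⟨h01, le_refl μ₁'⟩
    have h1b : μ₁' ≤ μ₁ := hm2.2
    have habs4 : |μ₁ - μ₁'| = μ₁ - μ₁' := abs_of_nonneg (by linarith)
    rw [habs1, habs2, one_mul, max_eq_left (by linarith : μ₁' - μ₀' ≤ μ₁ - μ₀)] at hK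
    rw [habs1, habs2, habs3, habs4, max_eq_left (by linarith : μ₁' - μ₀' ≤ μ₁ - μ₀), ge_iff_le]
    have h := nested_case1 (σ := σ) (μ₀ := μ₀) (a := μ₀' - μ₀) (d := μ₁' - μ₀')
      (b := μ₁ - μ₁') hσ (by linarith) (by linarith) (by linarith) (by linarith)
    rw [show μ₀ + (μ₀' - μ₀ + (μ₁' - μ₀') + (μ₁ - μ₁')) = μ₁ by ring,
      show μ₀ + (μ₀' - μ₀) = μ₀' by ring,
      show μ₀ + (μ₀' - μ₀ + (μ₁' - μ₀')) = μ₁' by ring,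
      show μ₀' - μ₀ + (μ₁' - μ₀') + (μ₁ - μ₁') = μ₁ - μ₀ by ring] at h
    have hmle : min 1 ((μ₁ - μ₀) * max (μ₀' - μ₀) (μ₁ - μ₁') / σ^2)
        ≤ (μ₁ - μ₀) * max (μ₀' - μ₀) (μ₁ - μ₁') / σ^2 := min_le_right _ _
    calc 1/10^24 * min 1 ((μ₁ - μ₀) * max (μ₀' - μ₀) (μ₁ - μ₁') / σ^2)
        ≤ 1/10^24 * ((μ₁ - μ₀) * max (μ₀' - μ₀) (μ₁ - μ₁') / σ^2) := by
          apply mul_le_mul_of_nonneg_left hmle (by norm_num)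
      _ ≤ tvDist (mix1d μ₀ μ₁ σ) (mix1d μ₀' μ₁' σ) := h
  · intro hnot
    rw [habs3, ge_iff_le]
    by_cases hsub : Set.Icc μ₀' μ₁' ⊆ Set.Icc μ₀ μ₁
    · have hm2 : μ₁' ∈ Set.Icc μ₀ μ₁ := hsub ⟨h01, le_refl μ₁'⟩
      have h1b : μ₁' ≤ μ₁ := hm2.2
      have habs4 : |μ₁ - μ₁'| = μ₁ - μ₁' := abs_of_nonneg (by linarith)
      have hK : σ < μ₁ - μ₀ := by
        by_contra hKK
        push_neg at hKK
        refine hnot ⟨hsub, ?_⟩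
        rw [habs1, habs2, one_mul, max_eq_left (by linarith : μ₁' - μ₀' ≤ μ₁ - μ₀)]
        linarith
      rw [habs4]
      have h := nested_case2 (σ := σ) (μ₀ := μ₀) (a := μ₀' - μ₀) (d := μ₁' - μ₀')
        (b := μ₁ - μ₁') hσ (by linarith) (by linarith) (by linarith) (by linarith)
      rw [show μ₀ + (μ₀' - μ₀ + (μ₁' - μ₀') + (μ₁ - μ₁')) = μ₁ by ring,
        show μ₀ + (μ₀' - μ₀) = μ₀' by ring,
        show μ₀ + (μ₀' - μ₀ + (μ₁' - μ₀')) = μ₁' by ring] at h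
      exact h
    · have h1 : μ₁ ≤ μ₁' := by
        by_contra hle
        push_neg at hle
        exact hsub (fun x hx => ⟨le_trans h0b hx.1, le_trans hx.2 hle.le⟩)
      have habs4 : |μ₁ - μ₁'| = μ₁' - μ₁ := by
        rw [abs_sub_comm]; exact abs_of_nonneg (by linarith)
      rw [habs4]
      rcases le_total (μ₁' - μ₁) (μ₀' - μ₀) with hc | hc
      · have hb := bridge_b1 (μ₀ := μ₀) (μ₁ := μ₁) (μ₀' := μ₀') (μ₁' := μ₁') hσ μ₀'
        rw [show μ₀' - μ₀' = (0:ℝ) by ring] at hb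
        have hj1 := jb1 (σ := σ) hσ (show (0:ℝ) ≤ μ₀' - μ₀ by linarith)
        have hj2 : 0 ≤ auxJ σ (μ₀' - μ₁') (μ₀' - μ₁) := auxJ_nonneg (by linarith)
        rw [max_eq_left hc]
        have hnn : 0 ≤ min 1 ((μ₀' - μ₀)/σ) :=
          le_min zero_le_one (div_nonneg (by linarith) hσ.le)
        have hcc : 1/10^24 * min 1 ((μ₀' - μ₀)/σ) ≤ 1/12 * min 1 ((μ₀' - μ₀)/σ) :=
          mul_le_mul_of_nonneg_right (by norm_num) hnn
        linarith
      · have hb := bridge_b1 (μ₀ := μ₀) (μ₁ := μ₁) (μ₀' := μ₀') (μ₁' := μ₁') hσ μ₁'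
        rw [show μ₁' - μ₁' = (0:ℝ) by ring] at hb
        have hj1 := jb1 (σ := σ) hσ (show (0:ℝ) ≤ μ₁' - μ₁ by linarith)
        have hj2 : 0 ≤ auxJ σ (μ₁' - μ₀') (μ₁' - μ₀) := auxJ_nonneg (by linarith)
        rw [max_eq_right hc]
        have hnn : 0 ≤ min 1 ((μ₁' - μ₁)/σ) :=
          le_min zero_le_one (div_nonneg (by linarith) hσ.le)
        have hcc : 1/10^24 * min 1 ((μ₁' - μ₁)/σ) ≤ 1/12 * min 1 ((μ₁' - μ₁)/σ) :=
          mul_le_mul_of_nonneg_right (by norm_num) hnn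
        linarith
end

section
/- Let μ₀, μ₁, μ₀′, μ₁′ ∈ ℝ with μ₀ ≤ min(μ₁, μ₀′, μ₁′) and μ₀′ ≤ μ₁′, and let t > 0 satisfy t(μ₁−μ₀) ∈ [0, π/4], t(μ₀′−μ₀) ∈ [0, π/4], and t(μ₁′−μ₀) ∈ [0, π/4]. If μ₁′ > μ₁, then |e^{itμ₀} + e^{itμ₁} − e^{itμ₀′} − e^{itμ₁′}| ≥ t·δ₂ / (2√2). -/
set_option maxHeartbeats 1000000

open Real

theorem stmt_6 (μ₀ μ₁ μ₀' μ₁' t : ℝ) (ht : 0 < t)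
    (h0 : μ₀ ≤ min μ₁ (min μ₀' μ₁')) (h1 : μ₀' ≤ μ₁')
    (ha : t * (μ₁ - μ₀) ∈ Set.Icc 0 (π/4))
    (hb : t * (μ₀' - μ₀) ∈ Set.Icc 0 (π/4))
    (hc : t * (μ₁' - μ₀) ∈ Set.Icc 0 (π/4))
    (hgt : μ₁' > μ₁) :
    ‖Complex.exp (Complex.I * t * μ₀) + Complex.exp (Complex.I * t * μ₁)
        - Complex.exp (Complex.I * t * μ₀') - Complex.exp (Complex.I * t * μ₁')‖ ≥
      t * max |μ₀' - μ₀| |μ₁ - μ₁'| / (2 * Real.sqrt 2) := by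
  obtain ⟨ha0, ha1⟩ := ha
  obtain ⟨hb0, hb1⟩ := hb
  obtain ⟨hc0, hc1⟩ := hc
  set a := t * (μ₁ - μ₀) with hadef
  set b := t * (μ₀' - μ₀) with hbdef
  set c := t * (μ₁' - μ₀) with hcdef
  have hπ : (0:ℝ) < π := Real.pi_pos
  have hac : a < c := by
    rw [hadef, hcdef]; nlinarith
  have e1 : Complex.exp (Complex.I * t * μ₁)
      = Complex.exp (Complex.I * t * μ₀) * Complex.exp ((a:ℂ) * Complex.I) := by
    rw [← Complex.exp_add]; congr 1; rw [hadef]; push_cast; ring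
  have e2 : Complex.exp (Complex.I * t * μ₀')
      = Complex.exp (Complex.I * t * μ₀) * Complex.exp ((b:ℂ) * Complex.I) := by
    rw [← Complex.exp_add]; congr 1; rw [hbdef]; push_cast; ring
  have e3 : Complex.exp (Complex.I * t * μ₁')
      = Complex.exp (Complex.I * t * μ₀) * Complex.exp ((c:ℂ) * Complex.I) := by
    rw [← Complex.exp_add]; congr 1; rw [hcdef]; push_cast; ring
  have hfac : Complex.exp (Complex.I * t * μ₀) + Complex.exp (Complex.I * t * μ₁)
        - Complex.exp (Complex.I * t * μ₀') - Complex.exp (Complex.I * t * μ₁')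
      = Complex.exp (Complex.I * t * μ₀) *
        (1 + Complex.exp ((a:ℂ) * Complex.I) - Complex.exp ((b:ℂ) * Complex.I)
          - Complex.exp ((c:ℂ) * Complex.I)) := by
    rw [e1, e2, e3]; ring
  rw [hfac, norm_mul, Complex.norm_exp]
  have hre : (Complex.I * t * μ₀).re = 0 := by simp
  rw [hre, Real.exp_zero, one_mul]
  set z : ℂ := 1 + Complex.exp ((a:ℂ) * Complex.I) - Complex.exp ((b:ℂ) * Complex.I)
      - Complex.exp ((c:ℂ) * Complex.I) with hz
  have him : z.im = Real.sin a - Real.sin b - Real.sin c := by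
    simp [hz, Complex.exp_ofReal_mul_I_im]
  have habs : |z.im| ≤ ‖z‖ := Complex.abs_im_le_norm z
  have hs2 : Real.sqrt 2 ≤ 1.5 := by
    rw [show (1.5:ℝ) = Real.sqrt (1.5^2) by rw [Real.sqrt_sq]; norm_num]
    exact Real.sqrt_le_sqrt (by norm_num)
  have hs2' : (1:ℝ) ≤ Real.sqrt 2 := by
    rw [show (1:ℝ) = Real.sqrt 1 by simp]
    exact Real.sqrt_le_sqrt (by norm_num)
  have hsq : Real.sqrt 2 * Real.sqrt 2 = 2 :=
    Real.mul_self_sqrt (by norm_num)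
  have hπ4 : π ≤ 4 := Real.pi_le_four
  have hsinb : 2 / π * b ≤ Real.sin b := Real.mul_le_sin hb0 (by linarith)
  have hsinca : Real.sqrt 2 / π * (c - a) ≤ Real.sin c - Real.sin a := by
    rw [Real.sin_sub_sin]
    have h1' : 2 / π * ((c - a) / 2) ≤ Real.sin ((c - a) / 2) :=
      Real.mul_le_sin (by linarith) (by linarith)
    have h2' : Real.sqrt 2 / 2 ≤ Real.cos ((c + a) / 2) := by
      have := Real.cos_le_cos_of_nonneg_of_le_pi (x := (c + a) / 2) (y := π/4)
        (by linarith) (by linarith) (by linarith)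
      rwa [Real.cos_pi_div_four] at this
    have hsnn : 0 ≤ Real.sin ((c - a) / 2) := by
      have : 0 ≤ 2 / π * ((c - a) / 2) :=
        mul_nonneg (by positivity) (by linarith)
      linarith
    calc Real.sqrt 2 / π * (c - a)
        = 2 * (2 / π * ((c - a)/2)) * (Real.sqrt 2 / 2) := by field_simp
      _ ≤ 2 * Real.sin ((c - a)/2) * (Real.sqrt 2 / 2) := by
          apply mul_le_mul_of_nonneg_right (by linarith) (by positivity)
      _ ≤ 2 * Real.sin ((c - a)/2) * Real.cos ((c + a)/2) := by
          apply mul_le_mul_of_nonneg_left h2' (by linarith)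
  have hsina_le : Real.sin a ≤ Real.sin c :=
    Real.sin_le_sin_of_le_of_le_pi_div_two (by linarith) (by linarith) hac.le
  have hsinb0 : 0 ≤ Real.sin b := Real.sin_nonneg_of_nonneg_of_le_pi hb0 (by linarith)
  have himabs : |z.im| = Real.sin b + Real.sin c - Real.sin a := by
    rw [him, abs_of_nonpos (by linarith)]; ring
  have hmax : t * max |μ₀' - μ₀| |μ₁ - μ₁'| = max b (c - a) := by
    rw [abs_of_nonneg (by nlinarith [le_trans h0 (min_le_right _ _), min_le_left μ₀' μ₁']),
      abs_of_nonpos (by linarith), mul_max_of_nonneg _ _ ht.le, hadef, hbdef, hcdef]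
    congr 1 <;> ring
  rw [ge_iff_le, hmax]
  have k1 : (1:ℝ)/(2*Real.sqrt 2) ≤ 2/π := by
    rw [div_le_div_iff₀ (by positivity) hπ]; nlinarith [hsq]
  have k2 : (1:ℝ)/(2*Real.sqrt 2) ≤ Real.sqrt 2/π := by
    rw [div_le_div_iff₀ (by positivity) hπ]
    have h4 : Real.sqrt 2 * (2*Real.sqrt 2) = 4 := by linear_combination 2*hsq
    linarith
  have hfinal : max b (c - a) / (2 * Real.sqrt 2) ≤ Real.sin b + Real.sin c - Real.sin a := by
    rcases max_cases b (c - a) with ⟨hm, hle⟩ | ⟨hm, hle⟩ <;> rw [hm]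
    · have : b / (2 * Real.sqrt 2) ≤ 2/π * b := by
        calc b / (2 * Real.sqrt 2) = (1/(2*Real.sqrt 2)) * b := by ring
          _ ≤ 2/π * b := mul_le_mul_of_nonneg_right k1 hb0
      linarith
    · have : (c - a) / (2 * Real.sqrt 2) ≤ Real.sqrt 2/π * (c - a) := by
        calc (c - a) / (2 * Real.sqrt 2) = (1/(2*Real.sqrt 2)) * (c - a) := by ring
          _ ≤ Real.sqrt 2/π * (c - a) := mul_le_mul_of_nonneg_right k2 (by linarith)
      linarith
  calc max b (c - a) / (2 * Real.sqrt 2) ≤ Real.sin b + Real.sin c - Real.sin a := hfinal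
    _ = |z.im| := himabs.symm
    _ ≤ ‖z‖ := habs
end

section
/- Let μ₀, μ₁, μ₀′, μ₁′ ∈ ℝ with μ₀ ≤ min(μ₁, μ₀′, μ₁′) and μ₀′ ≤ μ₁′, and let t > 0 satisfy t(μ₁−μ₀) ∈ [0, π/4], t(μ₀′−μ₀) ∈ [0, π/4], and t(μ₁′−μ₀) ∈ [0, π/4]. If μ₀′ ∈ [μ₀, μ₁] and μ₁′ ∈ [μ₀, μ₁], then |e^{itμ₀} + e^{itμ₁} − e^{itμ₀′} − e^{itμ₁′}| ≥ max( t²·(δ₁−δ₄)·δ₄ / 2 , t·δ₃ / (4√2) ). -/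
open Real

lemma exp_add_exp_eq (x y : ℝ) :
    Complex.exp (Complex.I * x) + Complex.exp (Complex.I * y) =
      2 * (Real.cos ((x - y)/2) : ℂ) * Complex.exp (Complex.I * (((x + y)/2 : ℝ) : ℂ)) := by
  have h := Complex.two_cos (((x - y)/2 : ℝ) : ℂ)
  rw [Complex.ofReal_cos]
  calc Complex.exp (Complex.I * x) + Complex.exp (Complex.I * y)
      = Complex.exp ((((x-y)/2:ℝ):ℂ) * Complex.I + Complex.I * (((x+y)/2 : ℝ):ℂ))
        + Complex.exp (-(((x-y)/2:ℝ):ℂ) * Complex.I + Complex.I * (((x+y)/2 : ℝ):ℂ)) := by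
        congr 1 <;> congr 1 <;> push_cast <;> ring
    _ = 2 * Complex.cos (((x - y)/2 : ℝ) : ℂ) * Complex.exp (Complex.I * (((x + y)/2 : ℝ) : ℂ)) := by
        rw [Complex.exp_add, Complex.exp_add, ← add_mul, ← h]

lemma abs_two_cos_exp (c ψ : ℝ) :
    ‖2 * (c:ℂ) * Complex.exp (Complex.I * (ψ:ℂ))‖ = 2 * |c| := by
  rw [norm_mul, norm_mul, Complex.norm_two, Complex.norm_real, Complex.norm_exp]
  simp

lemma im_two_cos_exp (c ψ : ℝ) :
    (2 * (c:ℂ) * Complex.exp (Complex.I * (ψ:ℂ))).im = 2 * c * Real.sin ψ := by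
  rw [mul_comm Complex.I, Complex.exp_mul_I]
  simp [Complex.add_im, Complex.mul_im, Complex.sin_ofReal_re, Complex.cos_ofReal_re,
    Complex.sin_ofReal_im, Complex.cos_ofReal_im]

lemma key1 {P R : ℝ} (hR : 0 ≤ R) (hRP : R ≤ P) (hP : P ≤ 1/2) :
    (P^2 - R^2)/4 ≤ Real.cos R - Real.cos P := by
  rcases eq_or_lt_of_le hRP with h | h
  · subst h; simp
  · have hu : (0:ℝ) < (P+R)/2 := by linarith
    have hv : (0:ℝ) < (P-R)/2 := by linarith
    have hu1 : (P+R)/2 ≤ 1/2 := by linarith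
    have hv1 : (P-R)/2 ≤ 1/2 := by linarith
    have hsu := Real.sin_gt_sub_cube hu
    have hsv := Real.sin_gt_sub_cube hv
    have hcos : Real.cos R - Real.cos P = 2 * Real.sin ((P+R)/2) * Real.sin ((P-R)/2) := by
      rw [Real.cos_sub_cos, show (R-P)/2 = -((P-R)/2) by ring, Real.sin_neg,
        show (R+P)/2 = (P+R)/2 by ring]
      ring
    rw [hcos]
    have hu2 : ((P+R)/2)^2 ≤ 1/4 := by nlinarith
    have hv2 : ((P-R)/2)^2 ≤ 1/4 := by nlinarith
    have h1 : (15/16)*((P+R)/2) ≤ Real.sin ((P+R)/2) := by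
      nlinarith [mul_nonneg hu.le (by linarith : (0:ℝ) ≤ 1/4 - ((P+R)/2)^2)]
    have h2 : (15/16)*((P-R)/2) ≤ Real.sin ((P-R)/2) := by
      nlinarith [mul_nonneg hv.le (by linarith : (0:ℝ) ≤ 1/4 - ((P-R)/2)^2)]
    nlinarith [mul_le_mul h1 h2 (by positivity) (le_trans (by positivity) h1)]


lemma key0 {A m P R : ℝ} (hA : A = 2*P) (h0 : 0 ≤ m) (hR0 : 0 ≤ R) (hms : m ≤ P - R) :
    (A - m)*m/2 ≤ (P^2 - R^2)/2 := by
  nlinarith [mul_self_le_mul_self hR0 (by linarith : R ≤ P - m)]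

lemma key2 {x c s : ℝ} (hx : 0 ≤ x) (hc : Real.sqrt 2 / 2 ≤ c) (hs : 2/π * x ≤ s)
    (hs0 : 0 ≤ s) : 2 * x / (4 * Real.sqrt 2) ≤ 2 * c * s := by
  have h2 : Real.sqrt 2 ^ 2 = 2 := Real.sq_sqrt (by norm_num)
  have h0 : (0:ℝ) < Real.sqrt 2 := Real.sqrt_pos.2 (by norm_num)
  have hπ4 : π ≤ 4 := Real.pi_le_four
  have hπ0 : 0 < π := Real.pi_pos
  have hx2 : 2*x ≤ s*π := by
    have h' : 2*x/π ≤ s := by rw [show 2*x/π = 2/π*x by ring]; exact hs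
    calc 2*x = 2*x/π*π := by field_simp
      _ ≤ s*π := by apply mul_le_mul_of_nonneg_right h' hπ0.le
  have this1 := mul_le_mul_of_nonneg_left (mul_le_mul_of_nonneg_right hc hs0) h0.le
  have lhs_eq : Real.sqrt 2*(Real.sqrt 2/2*s) = s := by
    rw [show Real.sqrt 2*(Real.sqrt 2/2*s) = Real.sqrt 2^2 * s/2 by ring, h2]; ring
  have key : s ≤ Real.sqrt 2*(c*s) := by linarith [this1, lhs_eq]
  rw [div_le_iff₀ (by positivity)]
  have hsp : 0 ≤ s*(4-π) := mul_nonneg hs0 (by linarith)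
  nlinarith [key, hx2, hsp]

set_option maxHeartbeats 800000 in
theorem stmt_7 (μ₀ μ₁ μ₀' μ₁' t : ℝ) (ht : 0 < t)
    (h0 : μ₀ ≤ min μ₁ (min μ₀' μ₁')) (h1 : μ₀' ≤ μ₁')
    (ha : t * (μ₁ - μ₀) ∈ Set.Icc 0 (π/4))
    (hb : t * (μ₀' - μ₀) ∈ Set.Icc 0 (π/4))
    (hc : t * (μ₁' - μ₀) ∈ Set.Icc 0 (π/4))
    (hin : μ₀' ∈ Set.Icc μ₀ μ₁ ∧ μ₁' ∈ Set.Icc μ₀ μ₁) :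
    ‖Complex.exp (Complex.I * t * μ₀) + Complex.exp (Complex.I * t * μ₁)
        - Complex.exp (Complex.I * t * μ₀') - Complex.exp (Complex.I * t * μ₁')‖ ≥
      max (t^2 * (max |μ₀ - μ₁| |μ₀' - μ₁'| - min |μ₀' - μ₀| |μ₁' - μ₁|) *
            min |μ₀' - μ₀| |μ₁' - μ₁| / 2)
          (t * |μ₀ + μ₁ - μ₀' - μ₁'| / (4 * Real.sqrt 2)) := by
  obtain ⟨hA0, hA4⟩ := ha
  obtain ⟨hB0, hB4⟩ := hb
  obtain ⟨hC0, hC4⟩ := hc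
  obtain ⟨⟨h0lo, h0hi⟩, ⟨h1lo, h1hi⟩⟩ := hin
  have hμ01 : μ₀ ≤ μ₁ := le_trans h0 (min_le_left _ _)
  have hπ : π ≤ 4 := Real.pi_le_four
  have hπ0 : 0 < π := Real.pi_pos
  set A := t * (μ₁ - μ₀) with hA
  set B := t * (μ₀' - μ₀) with hB
  set C := t * (μ₁' - μ₀) with hC
  have hBC : B ≤ C := by rw [hB, hC]; nlinarith
  have hCA : C ≤ A := by rw [hC, hA]; nlinarith
  -- rewrite exponentials
  have a0 : Complex.I * (t:ℂ) * (μ₀:ℂ) = Complex.I * ((t*μ₀ : ℝ):ℂ) := by push_cast; ring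
  have a1 : Complex.I * (t:ℂ) * (μ₁:ℂ) = Complex.I * ((t*μ₁ : ℝ):ℂ) := by push_cast; ring
  have a2 : Complex.I * (t:ℂ) * (μ₀':ℂ) = Complex.I * ((t*μ₀' : ℝ):ℂ) := by push_cast; ring
  have a3 : Complex.I * (t:ℂ) * (μ₁':ℂ) = Complex.I * ((t*μ₁' : ℝ):ℂ) := by push_cast; ring
  rw [a0, a1, a2, a3, sub_sub, exp_add_exp_eq, exp_add_exp_eq]
  set c1 := Real.cos ((t*μ₀ - t*μ₁)/2) with hc1def
  set c2 := Real.cos ((t*μ₀' - t*μ₁')/2) with hc2def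
  set ψ := (t*μ₀ + t*μ₁)/2 with hψdef
  set θ := (t*μ₀' + t*μ₁')/2 with hθdef
  set w1 : ℂ := 2 * (c1:ℂ) * Complex.exp (Complex.I * (ψ:ℝ)) with hw1
  set w2 : ℂ := 2 * (c2:ℂ) * Complex.exp (Complex.I * (θ:ℝ)) with hw2
  clear_value c1 c2 ψ θ w1 w2
  set P := A/2 with hP
  set R := (C - B)/2 with hR
  clear_value A B C P R
  have hc1P : c1 = Real.cos P := by
    rw [hc1def, hP, hA, show (t*μ₀ - t*μ₁)/2 = -(t*(μ₁-μ₀)/2) by ring, Real.cos_neg]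
  have hc2R : c2 = Real.cos R := by
    rw [hc2def, hR, hC, hB, show (t*μ₀' - t*μ₁')/2 = -((t*(μ₁'-μ₀) - t*(μ₀'-μ₀))/2) by ring,
      Real.cos_neg]
  have hR0 : 0 ≤ R := by rw [hR]; linarith
  have hRP : R ≤ P := by rw [hR, hP]; linarith
  have hP12 : P ≤ 1/2 := by rw [hP]; linarith
  have hcosP0 : 0 ≤ Real.cos P := by
    apply Real.cos_nonneg_of_mem_Icc
    constructor <;> [linarith; linarith]
  have hcosR0 : 0 ≤ Real.cos R := by
    apply Real.cos_nonneg_of_mem_Icc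
    constructor <;> [linarith; linarith]
  have habs1 : ‖w1‖ = 2 * Real.cos P := by
    rw [hw1, abs_two_cos_exp, hc1P, abs_of_nonneg hcosP0]
  have habs2 : ‖w2‖ = 2 * Real.cos R := by
    rw [hw2, abs_two_cos_exp, hc2R, abs_of_nonneg hcosR0]
  have hlow1 : 2 * Real.cos R - 2 * Real.cos P ≤ ‖w1 - w2‖ := by
    have h1' := norm_add_le (w2 - w1) w1
    rw [sub_add_cancel] at h1'
    rw [norm_sub_rev w2 w1] at h1'
    linarith [habs1 ▸ habs2 ▸ h1']
  -- bound 2 setup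
  have hrot : ‖w1 - w2‖ = ‖Complex.exp (-(Complex.I*(θ:ℂ))) * (w1 - w2)‖ := by
    rw [norm_mul, Complex.norm_exp]
    simp
  have him : (Complex.exp (-(Complex.I*(θ:ℂ))) * (w1 - w2)).im = 2 * c1 * Real.sin (ψ - θ) := by
    rw [mul_sub, hw1, hw2]
    have k1 : Complex.exp (-(Complex.I*(θ:ℂ))) * (2*(c1:ℂ)*Complex.exp (Complex.I*(ψ:ℂ)))
        = 2*(c1:ℂ)*Complex.exp (Complex.I*((ψ-θ:ℝ):ℂ)) := by
      rw [mul_comm, mul_assoc, ← Complex.exp_add]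
      have : Complex.I * (ψ:ℂ) + -(Complex.I * (θ:ℂ)) = Complex.I * ((ψ-θ:ℝ):ℂ) := by
        push_cast; ring
      rw [this]
    have k2 : Complex.exp (-(Complex.I*(θ:ℂ))) * (2*(c2:ℂ)*Complex.exp (Complex.I*(θ:ℂ)))
        = 2*(c2:ℂ) := by
      rw [mul_comm, mul_assoc, ← Complex.exp_add]
      have : Complex.I * (θ:ℂ) + -(Complex.I * (θ:ℂ)) = 0 := by ring
      rw [this, Complex.exp_zero, mul_one]
    rw [k1, k2, Complex.sub_im, im_two_cos_exp]
    simp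
  have hlow2 : 2 * Real.cos P * |Real.sin (ψ - θ)| ≤ ‖w1 - w2‖ := by
    rw [hrot]
    calc 2 * Real.cos P * |Real.sin (ψ - θ)| = |2 * c1 * Real.sin (ψ - θ)| := by
          rw [abs_mul, hc1P, abs_of_nonneg (by linarith : (0:ℝ) ≤ 2 * Real.cos P)]
      _ = |(Complex.exp (-(Complex.I*(θ:ℂ))) * (w1 - w2)).im| := by rw [him]
      _ ≤ _ := Complex.abs_im_le_norm _
  rw [ge_iff_le, max_le_iff]
  constructor
  · -- first bound
    have e1 : |μ₀ - μ₁| = μ₁ - μ₀ := by rw [abs_sub_comm]; exact abs_of_nonneg (by linarith)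
    have e2 : |μ₀' - μ₁'| = μ₁' - μ₀' := by rw [abs_sub_comm]; exact abs_of_nonneg (by linarith)
    have e3 : |μ₀' - μ₀| = μ₀' - μ₀ := abs_of_nonneg (by linarith)
    have e4 : |μ₁' - μ₁| = μ₁ - μ₁' := by rw [abs_sub_comm]; exact abs_of_nonneg (by linarith)
    have hmax : max (μ₁ - μ₀) (μ₁' - μ₀') = μ₁ - μ₀ := max_eq_left (by linarith)
    have hm : min B (A - C) = t * min (μ₀' - μ₀) (μ₁ - μ₁') := by
      rcases le_total (μ₀' - μ₀) (μ₁ - μ₁') with h | h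
      · rw [min_eq_left h, min_eq_left (by rw [hB, hC, hA]; nlinarith : B ≤ A - C), hB]
      · rw [min_eq_right h, min_eq_right (by rw [hB, hC, hA]; nlinarith : A - C ≤ B), hA, hC]
        ring
    have hr1 : t^2 * (max |μ₀ - μ₁| |μ₀' - μ₁'| - min |μ₀' - μ₀| |μ₁' - μ₁|) *
          min |μ₀' - μ₀| |μ₁' - μ₁| / 2 = (A - min B (A-C)) * min B (A-C) / 2 := by
      rw [e1, e2, e3, e4, hmax, hm, hA]; ring
    rw [hr1]
    have hm1 : min B (A-C) ≤ B := min_le_left _ _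
    have hm2 : min B (A-C) ≤ A - C := min_le_right _ _
    have hm0 : 0 ≤ min B (A-C) := le_min hB0 (by linarith)
    have hstep : (A - min B (A-C)) * min B (A-C) / 2 ≤ (P^2 - R^2)/2 := by
      have hms : min B (A-C) ≤ P - R := by rw [hP, hR]; linarith
      exact key0 (by rw [hP]; ring) hm0 hR0 hms
    have hk := key1 hR0 hRP hP12
    calc (A - min B (A-C)) * min B (A-C) / 2 ≤ (P^2 - R^2)/2 := hstep
      _ ≤ 2 * Real.cos R - 2 * Real.cos P := by linarith
      _ ≤ ‖w1 - w2‖ := hlow1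
  · -- second bound
    have hφ : ψ - θ = (A - B - C)/2 := by rw [hψdef, hθdef, hA, hB, hC]; ring
    have hφabs : |ψ - θ| ≤ π/2 := by
      rw [hφ, abs_le]
      constructor <;> [linarith; linarith]
    have hsin := Real.mul_abs_le_abs_sin hφabs
    have hcP : Real.sqrt 2 / 2 ≤ Real.cos P := by
      rw [← Real.cos_pi_div_four]
      exact Real.cos_le_cos_of_nonneg_of_le_pi (by rw [hP]; linarith) (by linarith) (by linarith)
    have htabs : t * |μ₀ + μ₁ - μ₀' - μ₁'| = 2 * |ψ - θ| := by
      rw [← abs_of_pos ht, ← abs_mul, show t * (μ₀ + μ₁ - μ₀' - μ₁') = 2 * (ψ - θ) by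
        rw [hψdef, hθdef]; ring, abs_mul]
      norm_num
    rw [htabs]
    have hfin : 2 * |ψ - θ| / (4 * Real.sqrt 2) ≤ 2 * Real.cos P * |Real.sin (ψ - θ)| :=
      key2 (abs_nonneg _) hcP hsin (abs_nonneg _)
    exact le_trans hfin hlow2
end

section
/- Let μ₀, μ₁, μ₀′, μ₁′ ∈ ℝ with μ₀ ≤ min(μ₁, μ₀′, μ₁′) and μ₀′ ≤ μ₁′, and let σ > 0. If max(|μ₀−μ₀′|, |μ₁−μ₁′|) ≥ 2σ, then ‖f_{μ₀,μ₁} − f_{μ₀′,μ₁′}‖_TV ≥ 1/2 − √(9/(8πe)), and in particular ‖f_{μ₀,μ₁} − f_{μ₀′,μ₁′}‖_TV ≥ 0.137. -/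
/-!
Write `φ(1) = exp(-1/2) / √(2π)` for the standard normal density at `1`, so that
`3/2 * φ(1) = √(9 / (8πe))`. By Mills' inequality a Gaussian puts mass at most `φ(1)` beyond one
standard deviation on either side of its mean. Hence on a half-line `Iic t`, a component whose mean
is at least `t + σ` has mass at most `φ(1)` and one whose mean is at most `t - σ` has mass at least
`1 - φ(1)`. If one pair of means is `2σ` apart, the ordering of the means lets `t` be chosen midway
between them so that the two mixtures differ on `Iic t` by at least `1/2 - 3/2 * φ(1)`.
-/

open MeasureTheory ProbabilityTheory Real
open scoped ENNReal NNReal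

open Set Filter Topology

theorem hasDerivAt_gaussianPDFReal (μ : ℝ) (v : ℝ≥0) (x : ℝ) :
    HasDerivAt (gaussianPDFReal μ v) (-(x - μ) / v * gaussianPDFReal μ v x) x := by
  have h : HasDerivAt (fun y => (y - μ) ^ 2) (2 * (x - μ)) x := by
    simpa using ((hasDerivAt_id' x).sub_const μ).fun_pow 2
  refine ((h.fun_neg.div_const (2 * v)).exp.const_mul (√(2 * π * v))⁻¹).congr_deriv ?_
  rw [gaussianPDFReal, neg_div, neg_div, mul_div_mul_left _ _ two_ne_zero]
  ring

theorem tendsto_gaussianPDFReal_atTop (μ : ℝ) {v : ℝ≥0} (hv : v ≠ 0) :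
    Tendsto (gaussianPDFReal μ v) atTop (𝓝 0) := by
  have hv' : (0 : ℝ) < 2 * v := by positivity
  have h : Tendsto (fun x => -(x - μ) ^ 2 / (2 * v)) atTop atBot := by
    refine (tendsto_neg_atTop_atBot.comp ?_).atBot_div_const hv'
    exact (tendsto_pow_atTop two_ne_zero).comp (tendsto_atTop_add_const_right _ _ tendsto_id)
  rw [gaussianPDFReal_def, ← mul_zero (√(2 * π * v))⁻¹]
  exact (tendsto_exp_atBot.comp h).const_mul _

/-- Mills' inequality: on `[t, ∞)` the density is at most `(x - μ) / (t - μ)` times itself, and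
`-v * gaussianPDFReal μ v` is an antiderivative of `(x - μ) * gaussianPDFReal μ v`. -/
theorem gaussianReal_real_Ici_le {μ t : ℝ} {v : ℝ≥0} (hv : v ≠ 0) (ht : μ < t) :
    (gaussianReal μ v).real (Ici t) ≤ v / (t - μ) * gaussianPDFReal μ v t := by
  set g : ℝ → ℝ := fun x => -(v / (t - μ) * gaussianPDFReal μ v x)
  set g' : ℝ → ℝ := fun x => (x - μ) / (t - μ) * gaussianPDFReal μ v x
  have hderiv : ∀ x ∈ Ici t, HasDerivAt g (g' x) x := fun x _ => by
    refine ((hasDerivAt_gaussianPDFReal μ v x).const_mul (v / (t - μ))).neg.congr_deriv ?_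
    have : (v : ℝ) ≠ 0 := by exact_mod_cast hv
    simp only [g']; field_simp
  have hg'_nonneg : ∀ x ∈ Ioi t, 0 ≤ g' x := fun x (hx : t < x) =>
    mul_nonneg (div_nonneg (by linarith) (by linarith)) (gaussianPDFReal_nonneg _ _ _)
  have hg : Tendsto g atTop (𝓝 0) := by
    simpa [g] using ((tendsto_gaussianPDFReal_atTop μ hv).const_mul (v / (t - μ))).neg
  have hpdf_le : ∀ x ∈ Ioi t, gaussianPDFReal μ v x ≤ g' x := fun x (hx : t < x) => by
    have : 1 ≤ (x - μ) / (t - μ) := by rw [one_le_div (by linarith)]; linarith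
    simpa [g'] using mul_le_mul_of_nonneg_right this (gaussianPDFReal_nonneg μ v x)
  calc (gaussianReal μ v).real (Ici t)
      = ∫ x in Ioi t, gaussianPDFReal μ v x := by
        rw [measureReal_def, gaussianReal_apply_eq_integral μ hv, integral_Ici_eq_integral_Ioi,
          ENNReal.toReal_ofReal (integral_nonneg fun x => gaussianPDFReal_nonneg _ _ _)]
    _ ≤ ∫ x in Ioi t, g' x :=
        setIntegral_mono_on (integrable_gaussianPDFReal μ v).integrableOn
          (integrableOn_Ioi_deriv_of_nonneg' hderiv hg'_nonneg hg) measurableSet_Ioi hpdf_le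
    _ = v / (t - μ) * gaussianPDFReal μ v t := by
        rw [integral_Ioi_of_hasDerivAt_of_nonneg' hderiv hg'_nonneg hg]; simp [g]

theorem gaussianReal_real_Ici_le_of_add_sqrt_le {μ t : ℝ} {v : ℝ≥0} (hv : v ≠ 0)
    (ht : μ + √v ≤ t) : (gaussianReal μ v).real (Ici t) ≤ gaussianPDFReal 0 1 1 := by
  have hsqrt : 0 < √(v : ℝ) := Real.sqrt_pos.mpr (by positivity)
  calc (gaussianReal μ v).real (Ici t)
      ≤ (gaussianReal μ v).real (Ici (μ + √v)) := measureReal_mono (Ici_subset_Ici.mpr ht)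
    _ ≤ v / (μ + √v - μ) * gaussianPDFReal μ v (μ + √v) := gaussianReal_real_Ici_le hv (by linarith)
    _ = gaussianPDFReal 0 1 1 := by
        have hsq : (√(v : ℝ)) ^ 2 = v := Real.sq_sqrt v.2
        simp only [gaussianPDFReal_def, add_sub_cancel_left, sub_zero, NNReal.coe_one, mul_one,
          Real.sqrt_mul (by positivity : (0 : ℝ) ≤ 2 * π)]
        have hv' : (v : ℝ) ≠ 0 := NNReal.coe_ne_zero.mpr hv
        rw [hsq, neg_div, div_mul_cancel_right₀ hv', one_pow]
        nth_rw 1 [← hsq]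
        field_simp

theorem gaussianReal_real_Iic_le_of_le_sub_sqrt {μ t : ℝ} {v : ℝ≥0} (hv : v ≠ 0)
    (ht : t ≤ μ - √v) : (gaussianReal μ v).real (Iic t) ≤ gaussianPDFReal 0 1 1 := by
  have hneg := gaussianReal_map_neg (μ := -μ) (v := v)
  rw [neg_neg] at hneg
  rw [← hneg, map_measureReal_apply measurable_neg measurableSet_Iic, neg_preimage, neg_Iic]
  exact gaussianReal_real_Ici_le_of_add_sqrt_le hv (by linarith)

theorem one_sub_le_gaussianReal_real_Iic_of_add_sqrt_le {μ t : ℝ} {v : ℝ≥0} (hv : v ≠ 0)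
    (ht : μ + √v ≤ t) : 1 - gaussianPDFReal 0 1 1 ≤ (gaussianReal μ v).real (Iic t) := by
  rw [← compl_Ioi, probReal_compl_eq_one_sub measurableSet_Ioi]
  gcongr
  exact (measureReal_mono Ioi_subset_Ici_self).trans
    (gaussianReal_real_Ici_le_of_add_sqrt_le hv ht)

theorem abs_sub_le_tvDist {Ω : Type*} [MeasurableSpace Ω] {f f' : Measure Ω}
    [IsProbabilityMeasure f] [IsProbabilityMeasure f'] {A : Set Ω} (hA : MeasurableSet A) :
    |f.real A - f'.real A| ≤ tvDist f f' := by
  have hbdd : BddAbove (range fun B : {B : Set Ω // MeasurableSet B} =>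
      (f B.1).toReal - (f' B.1).toReal) := by
    refine ⟨1, ?_⟩
    rintro _ ⟨B, rfl⟩
    have : f.real B.1 ≤ 1 := measureReal_le_one
    have : 0 ≤ f'.real B.1 := measureReal_nonneg
    simp only [← measureReal_def]
    linarith
  have hA_le : f.real A - f'.real A ≤ tvDist f f' := le_ciSup hbdd ⟨A, hA⟩
  have hAc_le : f.real Aᶜ - f'.real Aᶜ ≤ tvDist f f' := le_ciSup hbdd ⟨Aᶜ, hA.compl⟩
  rw [probReal_compl_eq_one_sub hA, probReal_compl_eq_one_sub hA] at hAc_le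
  exact abs_sub_le_iff.mpr ⟨hA_le, by linarith⟩

instance isProbabilityMeasure_mix1v (m₀ m₁ : ℝ) (v : ℝ≥0) :
    IsProbabilityMeasure (mix1v m₀ m₁ v) where
  measure_univ := by
    simp only [mix1v, Measure.add_apply, Measure.smul_apply, measure_univ, smul_eq_mul, mul_one]
    exact ENNReal.add_halves 1

theorem mix1v_real_apply (m₀ m₁ : ℝ) (v : ℝ≥0) (s : Set ℝ) :
    (mix1v m₀ m₁ v).real s = ((gaussianReal m₀ v).real s + (gaussianReal m₁ v).real s) / 2 := by
  rw [mix1v, measureReal_add_apply (by simp [ENNReal.mul_eq_top]) (by simp [ENNReal.mul_eq_top]),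
    measureReal_ennreal_smul_apply, measureReal_ennreal_smul_apply]
  norm_num
  ring

theorem sqrt_nine_div_eq : √(9 / (8 * π * exp 1)) = 3 / 2 * gaussianPDFReal 0 1 1 := by
  rw [← Real.sqrt_sq (mul_nonneg (by norm_num) (gaussianPDFReal_nonneg 0 1 1))]
  congr 1
  simp only [gaussianPDFReal_def, NNReal.coe_one, mul_pow, inv_pow, mul_one,
    Real.sq_sqrt (by positivity : (0 : ℝ) ≤ 2 * π)]
  field_simp
  rw [← exp_nat_mul]
  have : exp 1 * exp (-1) = 1 := by rw [← exp_add]; norm_num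
  norm_num
  linear_combination -72 * this

theorem sqrt_nine_div_le : √(9 / (8 * π * exp 1)) ≤ 0.363 := by
  have := pi_gt_d6
  have := exp_one_gt_d9
  rw [Real.sqrt_le_left (by norm_num), div_le_iff₀ (by positivity)]
  nlinarith

theorem half_sub_le_tvDist_mix1v {μ₀ μ₁ μ₀' μ₁' : ℝ} {v : ℝ≥0} (hv : v ≠ 0) (h01 : μ₀ ≤ μ₁)
    (h00' : μ₀ ≤ μ₀') (h1 : μ₀' ≤ μ₁') (hgap : 2 * √v ≤ max |μ₀ - μ₀'| |μ₁ - μ₁'|) :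
    1 / 2 - 3 / 2 * gaussianPDFReal 0 1 1 ≤ tvDist (mix1v μ₀ μ₁ v) (mix1v μ₀' μ₁' v) := by
  set σ := √(v : ℝ)
  set c := gaussianPDFReal 0 1 1
  have lower_tail {m t : ℝ} (h : t + σ ≤ m) : (gaussianReal m v).real (Iic t) ≤ c :=
    gaussianReal_real_Iic_le_of_le_sub_sqrt hv (by linarith)
  have upper_tail {m t : ℝ} (h : m + σ ≤ t) : 1 - c ≤ (gaussianReal m v).real (Iic t) :=
    one_sub_le_gaussianReal_real_Iic_of_add_sqrt_le hv h
  have prob_nonneg (m t : ℝ) : 0 ≤ (gaussianReal m v).real (Iic t) := measureReal_nonneg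
  have prob_le_one (m t : ℝ) : (gaussianReal m v).real (Iic t) ≤ 1 := measureReal_le_one
  suffices ∃ t, 1 / 2 - 3 / 2 * c ≤
      |(mix1v μ₀ μ₁ v).real (Iic t) - (mix1v μ₀' μ₁' v).real (Iic t)| by
    obtain ⟨t, ht⟩ := this
    exact ht.trans (abs_sub_le_tvDist measurableSet_Iic)
  simp only [mix1v_real_apply]
  rcases le_max_iff.mp hgap with h | h
  · rw [abs_sub_comm, abs_of_nonneg (by linarith)] at h
    refine ⟨μ₀ + σ, le_abs.mpr (Or.inl ?_)⟩
    linarith [upper_tail (m := μ₀) le_rfl, lower_tail (m := μ₀') (t := μ₀ + σ) (by linarith),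
      lower_tail (m := μ₁') (t := μ₀ + σ) (by linarith), prob_nonneg μ₁ (μ₀ + σ)]
  · rcases le_abs'.mp h with h | h
    · refine ⟨μ₁ + σ, le_abs.mpr (Or.inl ?_)⟩
      linarith [upper_tail (m := μ₀) (t := μ₁ + σ) (by linarith), upper_tail (m := μ₁) le_rfl,
        lower_tail (m := μ₁') (t := μ₁ + σ) (by linarith), prob_le_one μ₀' (μ₁ + σ)]
    · refine ⟨μ₁ - σ, le_abs.mpr (Or.inr ?_)⟩
      linarith [upper_tail (m := μ₀') (t := μ₁ - σ) (by linarith),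
        upper_tail (m := μ₁') (t := μ₁ - σ) (by linarith),
        lower_tail (m := μ₁) (t := μ₁ - σ) (by linarith), prob_le_one μ₀ (μ₁ - σ)]

theorem stmt_8 (μ₀ μ₁ μ₀' μ₁' σ : ℝ) (hσ : 0 < σ)
    (h0 : μ₀ ≤ min μ₁ (min μ₀' μ₁')) (h1 : μ₀' ≤ μ₁')
    (hgap : max |μ₀ - μ₀'| |μ₁ - μ₁'| ≥ 2 * σ) :
    tvDist (mix1d μ₀ μ₁ σ) (mix1d μ₀' μ₁' σ) ≥
        1/2 - Real.sqrt (9 / (8 * π * Real.exp 1)) ∧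
    tvDist (mix1d μ₀ μ₁ σ) (mix1d μ₀' μ₁' σ) ≥ 0.137 := by
  have hv : (⟨σ ^ 2, sq_nonneg σ⟩ : ℝ≥0) ≠ 0 := NNReal.coe_ne_zero.mp (pow_ne_zero 2 hσ.ne')
  have hsd : √((⟨σ ^ 2, sq_nonneg σ⟩ : ℝ≥0) : ℝ) = σ := Real.sqrt_sq hσ.le
  obtain ⟨h01, h00', -⟩ : μ₀ ≤ μ₁ ∧ μ₀ ≤ μ₀' ∧ μ₀ ≤ μ₁' := by simpa only [le_min_iff] using h0
  have hbound : 1 / 2 - √(9 / (8 * π * exp 1)) ≤ tvDist (mix1d μ₀ μ₁ σ) (mix1d μ₀' μ₁' σ) := by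
    rw [sqrt_nine_div_eq]
    exact half_sub_le_tvDist_mix1v hv h01 h00' h1 ((congrArg (2 * ·) hsd).trans_le hgap)
  exact ⟨hbound, le_trans (by linarith [sqrt_nine_div_le]) hbound⟩
end

section
/- Let μ₀, μ₁, μ₀′, μ₁′ ∈ ℝ with μ₀ ≤ min(μ₁, μ₀′, μ₁′) and μ₀′ ≤ μ₁′, and let σ > 0. If max(|μ₀−μ₁|, |μ₀′−μ₁′|) ≥ 100σ and max(|μ₀−μ₀′|, |μ₁−μ₁′|) ≤ 2σ, then sup_{t ∈ ℝ} e^{−σ²t²/2} · |e^{itμ₀} + e^{itμ₁} − e^{itμ₀′} − e^{itμ₁′}| ≥ π²·δ₂ / (240·e·σ). -/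
open Real

private lemma trig_aux (x y z : ℝ) :
    (1 - Real.cos (2*x)) * (Real.cos (x - y + z) - Real.cos (x + y + z))
      - Real.sin (2*x) * (Real.sin (x - y + z) - Real.sin (x + y + z))
      = 4 * Real.sin x * Real.sin y * Real.cos z := by
  simp only [Real.cos_two_mul', Real.sin_two_mul, Real.cos_add, Real.sin_add,
    Real.cos_sub, Real.sin_sub]
  linear_combination (2 * Real.sin y * (Real.sin x * Real.cos z - Real.cos x * Real.sin z)) *
    (Real.sin_sq_add_cos_sq x)

private lemma sin_lb {t y σ : ℝ} (hσ : 0 < σ) (ht1 : 1/σ ≤ t) (hst : σ*t ≤ 31/30)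
    (hy0 : 0 ≤ y) (hy : y ≤ 2*σ) : 2/π * (y/σ) ≤ 2 * Real.sin (t*y/2) := by
  have hπ : (3.14:ℝ) < π := Real.pi_gt_d2
  have ht0 : 0 < t := lt_of_lt_of_le (by positivity) ht1
  have hty : t * y ≤ 2 * (σ * t) := by nlinarith
  have h1 : 0 ≤ t*y/2 := by positivity
  have h2 : t*y/2 ≤ π/2 := by nlinarith
  have h3 := Real.mul_le_sin h1 h2
  have h1σ : 1 ≤ t*σ := by rw [div_le_iff₀ hσ] at ht1; linarith
  have h4 : y/σ ≤ t*y := by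
    rw [div_le_iff₀ hσ]
    nlinarith [mul_le_mul_of_nonneg_left h1σ hy0]
  have hπ0 : (0:ℝ) < 2/π := by positivity
  nlinarith [mul_le_mul_of_nonneg_left h4 hπ0.le]


private lemma exp_arith {σ T : ℝ} (h0 : 0 < σ*T) (h1 : σ*T ≤ 31/30) :
    (-1:ℝ) ≤ -(σ^2*T^2)/2 := by nlinarith

private lemma final_arith {δ σ : ℝ} (hδ0 : 0 ≤ δ) (hσ : 0 < σ) :
    π^2 * δ / (240 * Real.exp 1 * σ) ≤ Real.exp (-1) * (2/π * (δ/σ)) := by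
  have hπ0 : (0:ℝ) < π := Real.pi_pos
  have he1 : (0:ℝ) < Real.exp 1 := Real.exp_pos 1
  have heq : Real.exp (-1) * (2/π * (δ/σ)) = 2*δ/(π*Real.exp 1*σ) := by
    rw [Real.exp_neg]; field_simp
  have hπ3 : π^3 ≤ 480 := by nlinarith [Real.pi_lt_d2, Real.pi_pos, mul_pos Real.pi_pos Real.pi_pos]
  rw [heq, div_le_div_iff₀ (by positivity) (by positivity)]
  nlinarith [mul_nonneg (sub_nonneg.mpr hπ3) (mul_nonneg (mul_nonneg hδ0 he1.le) hσ.le)]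

set_option maxHeartbeats 1000000 in
theorem stmt_9 (μ₀ μ₁ μ₀' μ₁' σ : ℝ) (hσ : 0 < σ)
    (h0 : μ₀ ≤ min μ₁ (min μ₀' μ₁')) (h1 : μ₀' ≤ μ₁')
    (hfar : max |μ₀ - μ₁| |μ₀' - μ₁'| ≥ 100 * σ)
    (hclose : max |μ₀ - μ₀'| |μ₁ - μ₁'| ≤ 2 * σ) :
    (⨆ t : ℝ, Real.exp (-(σ^2 * t^2) / 2) *
        ‖Complex.exp (Complex.I * t * μ₀) + Complex.exp (Complex.I * t * μ₁)
          - Complex.exp (Complex.I * t * μ₀') - Complex.exp (Complex.I * t * μ₁')‖) ≥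
      π^2 * max |μ₀' - μ₀| |μ₁ - μ₁'| / (240 * Real.exp 1 * σ) := by
  have hπ : (3.14:ℝ) < π := Real.pi_gt_d2
  have hπ' : π < 3.15 := Real.pi_lt_d2
  have hπ0 : (0:ℝ) < π := Real.pi_pos
  simp only [le_min_iff] at h0
  obtain ⟨h01, h00', h01'⟩ := h0
  -- basic facts
  have hb0 : 0 ≤ μ₀' - μ₀ := by linarith
  have habs3 : |μ₀ - μ₀'| = μ₀' - μ₀ := by rw [abs_sub_comm]; exact abs_of_nonneg hb0
  have hb2 : μ₀' - μ₀ ≤ 2*σ := by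
    rw [← habs3]; exact le_trans (le_max_left _ _) hclose
  have hdabs : |μ₁ - μ₁'| ≤ 2*σ := le_trans (le_max_right _ _) hclose
  obtain ⟨hdlo, hdhi⟩ := abs_le.mp hdabs
  have hc98 : 98*σ ≤ μ₁' - μ₀ := by
    rcases le_max_iff.mp hfar with h | h
    · rw [abs_sub_comm, abs_of_nonneg (by linarith : (0:ℝ) ≤ μ₁ - μ₀)] at h
      linarith
    · rw [abs_sub_comm, abs_of_nonneg (by linarith : (0:ℝ) ≤ μ₁' - μ₀')] at h
      linarith
  set K : ℝ := (μ₁' - μ₀) - ((μ₀' - μ₀) - (μ₁ - μ₁'))/2 with hKdef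
  have hK : 96*σ ≤ K := by rw [hKdef]; linarith
  have hK0 : 0 < K := lt_of_lt_of_le (by positivity) hK
  set n : ℤ := ⌈(K/σ - π/2)/π⌉ with hndef
  set T : ℝ := (π/2 + n*π)/K with hTdef
  have hT_eq : T * K = π/2 + n*π := by
    rw [hTdef]; field_simp
  have hn1 : (K/σ - π/2)/π ≤ (n:ℝ) := Int.le_ceil _
  have hn2 : (n:ℝ) < (K/σ - π/2)/π + 1 := Int.ceil_lt_add_one _
  have e1 : (K/σ - π/2)/π * π = K/σ - π/2 := div_mul_cancel₀ _ (ne_of_gt hπ0)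
  have hlow : K/σ ≤ π/2 + (n:ℝ)*π := by nlinarith
  have hhigh : π/2 + (n:ℝ)*π ≤ K/σ + π := by nlinarith
  have hT1 : 1/σ ≤ T := by
    have h5 : (1/σ) * K ≤ T * K := by
      rw [hT_eq]
      have : (1/σ) * K = K/σ := by ring
      linarith
    exact le_of_mul_le_mul_right h5 hK0
  have hT0 : 0 < T := lt_of_lt_of_le (by positivity) hT1
  have hsT : σ * T ≤ 31/30 := by
    have h5 : σ * T * K ≤ (31/30) * K := by
      have h6 : σ * (T * K) ≤ σ * (K/σ + π) := mul_le_mul_of_nonneg_left (hT_eq ▸ hhigh) hσ.le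
      have h7 : σ * (K/σ + π) = K + σ*π := by field_simp
      nlinarith
    exact le_of_mul_le_mul_right h5 hK0
  have hcosK : Real.cos (T*K) = 0 := by
    rw [hT_eq, Real.cos_add, Real.cos_pi_div_two, Real.sin_pi_div_two]
    simp [Real.sin_int_mul_pi]
  -- complex setup
  have hre : ∀ x : ℝ, (Complex.exp (Complex.I * (T:ℂ) * (x:ℂ))).re = Real.cos (T*x) := by
    intro x
    rw [show Complex.I * (T:ℂ) * (x:ℂ) = ((T*x : ℝ) : ℂ) * Complex.I by push_cast; ring,
      Complex.exp_ofReal_mul_I_re]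
  have him : ∀ x : ℝ, (Complex.exp (Complex.I * (T:ℂ) * (x:ℂ))).im = Real.sin (T*x) := by
    intro x
    rw [show Complex.I * (T:ℂ) * (x:ℂ) = ((T*x : ℝ) : ℂ) * Complex.I by push_cast; ring,
      Complex.exp_ofReal_mul_I_im]
  set u : ℂ := 1 - Complex.exp (Complex.I * (T:ℂ) * ((μ₀' - μ₀ : ℝ):ℂ)) with hu
  set w : ℂ := Complex.exp (Complex.I * (T:ℂ) * ((μ₁' - μ₀ : ℝ):ℂ))
      - Complex.exp (Complex.I * (T:ℂ) * ((μ₁ - μ₀ : ℝ):ℂ)) with hw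
  have hcross : (u * (starRingEnd ℂ) w).re = 0 := by
    have h := trig_aux (T*(μ₀'-μ₀)/2) (T*(μ₁-μ₁')/2) (T*K)
    rw [hcosK, mul_zero] at h
    rw [Complex.mul_re, Complex.conj_re, Complex.conj_im]
    simp only [hu, hw, Complex.sub_re, Complex.sub_im, Complex.one_re, Complex.one_im,
      hre, him]
    have harg1 : T*(μ₀'-μ₀) = 2*(T*(μ₀'-μ₀)/2) := by ring
    have harg2 : T*(μ₁'-μ₀) = T*(μ₀'-μ₀)/2 - T*(μ₁-μ₁')/2 + T*K := by rw [hKdef]; ring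
    have harg3 : T*(μ₁-μ₀) = T*(μ₀'-μ₀)/2 + T*(μ₁-μ₁')/2 + T*K := by rw [hKdef]; ring
    rw [harg1, harg2, harg3]
    linear_combination h
  have hns : Complex.normSq (u - w) = Complex.normSq u + Complex.normSq w := by
    rw [Complex.normSq_sub, hcross]; ring
  have habsu : ‖u‖ ≤ ‖u - w‖ := by
    rw [Complex.norm_def, Complex.norm_def, hns]
    exact Real.sqrt_le_sqrt (le_add_of_nonneg_right (Complex.normSq_nonneg w))
  have habsw : ‖w‖ ≤ ‖u - w‖ := by
    rw [Complex.norm_def, Complex.norm_def, hns]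
    exact Real.sqrt_le_sqrt (le_add_of_nonneg_left (Complex.normSq_nonneg u))
  -- compute abs u and abs w
  have hsq1 : Complex.normSq u = (2*Real.sin (T*(μ₀'-μ₀)/2))^2 := by
    have hs := Real.sin_sq_eq_half_sub (T*(μ₀'-μ₀)/2)
    rw [show 2*(T*(μ₀'-μ₀)/2) = T*(μ₀'-μ₀) by ring] at hs
    rw [Complex.normSq_apply]
    simp only [hu, Complex.sub_re, Complex.sub_im, Complex.one_re, Complex.one_im, hre, him]
    linear_combination Real.sin_sq_add_cos_sq (T*(μ₀'-μ₀)) - 4*hs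
  have hsq2 : Complex.normSq w = (2*Real.sin (T*(μ₁-μ₁')/2))^2 := by
    have hs := Real.sin_sq_eq_half_sub (T*(μ₁-μ₁')/2)
    rw [show 2*(T*(μ₁-μ₁')/2) = T*(μ₁-μ₁') by ring] at hs
    have hc2 : Real.cos (T*(μ₁-μ₁')) =
        Real.cos (T*(μ₁-μ₀)) * Real.cos (T*(μ₁'-μ₀))
          + Real.sin (T*(μ₁-μ₀)) * Real.sin (T*(μ₁'-μ₀)) := by
      rw [show T*(μ₁-μ₁') = T*(μ₁-μ₀) - T*(μ₁'-μ₀) by ring, Real.cos_sub]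
    rw [Complex.normSq_apply]
    simp only [hw, Complex.sub_re, Complex.sub_im, hre, him]
    linear_combination Real.sin_sq_add_cos_sq (T*(μ₁-μ₀)) + Real.sin_sq_add_cos_sq (T*(μ₁'-μ₀))
      + 2*hc2 - 4*hs
  have habsu_eq : ‖u‖ = |2*Real.sin (T*(μ₀'-μ₀)/2)| := by
    rw [Complex.norm_def, hsq1, Real.sqrt_sq_eq_abs]
  have habsw_eq : ‖w‖ = |2*Real.sin (T*(μ₁-μ₁')/2)| := by
    rw [Complex.norm_def, hsq2, Real.sqrt_sq_eq_abs]
  -- the key lower bound on |u - w|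
  have hmain : 2/π * (max |μ₀' - μ₀| |μ₁ - μ₁'| / σ) ≤ ‖u - w‖ := by
    rcases max_cases |μ₀' - μ₀| |μ₁ - μ₁'| with ⟨hmx, _⟩ | ⟨hmx, _⟩
    · rw [hmx, abs_of_nonneg hb0]
      have := sin_lb hσ hT1 hsT hb0 hb2
      calc 2/π * ((μ₀' - μ₀)/σ) ≤ 2 * Real.sin (T*(μ₀'-μ₀)/2) := this
        _ ≤ |2*Real.sin (T*(μ₀'-μ₀)/2)| := le_abs_self _
        _ = ‖u‖ := habsu_eq.symm
        _ ≤ ‖u - w‖ := habsu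
    · rw [hmx]
      have hlb := sin_lb hσ hT1 hsT (abs_nonneg (μ₁ - μ₁')) hdabs
      have hstep : 2 * Real.sin (T*|μ₁-μ₁'|/2) ≤ |2*Real.sin (T*(μ₁-μ₁')/2)| := by
        rcases le_or_gt 0 (μ₁ - μ₁') with hd0 | hd0
        · rw [abs_of_nonneg hd0]
          exact le_abs_self _
        · rw [abs_of_neg hd0]
          rw [show T * -(μ₁-μ₁') / 2 = -(T*(μ₁-μ₁')/2) by ring, Real.sin_neg]
          rw [abs_mul, abs_two]
          have := neg_le_abs (Real.sin (T*(μ₁-μ₁')/2))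
          linarith
      calc 2/π * (|μ₁ - μ₁'|/σ) ≤ 2 * Real.sin (T*|μ₁-μ₁'|/2) := hlb
        _ ≤ |2*Real.sin (T*(μ₁-μ₁')/2)| := hstep
        _ = ‖w‖ := habsw_eq.symm
        _ ≤ ‖u - w‖ := habsw
  -- factorization
  have hmul : ∀ x : ℝ, Complex.exp (Complex.I * (T:ℂ) * (μ₀:ℂ)) *
      Complex.exp (Complex.I * (T:ℂ) * ((x - μ₀ : ℝ):ℂ)) = Complex.exp (Complex.I * (T:ℂ) * (x:ℂ)) := by
    intro x
    rw [← Complex.exp_add]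
    congr 1
    push_cast
    ring
  have hfactor : Complex.exp (Complex.I * (T:ℂ) * (μ₀:ℂ)) + Complex.exp (Complex.I * (T:ℂ) * (μ₁:ℂ))
      - Complex.exp (Complex.I * (T:ℂ) * (μ₀':ℂ)) - Complex.exp (Complex.I * (T:ℂ) * (μ₁':ℂ))
      = Complex.exp (Complex.I * (T:ℂ) * (μ₀:ℂ)) * (u - w) := by
    rw [hu, hw]
    rw [show Complex.exp (Complex.I * (T:ℂ) * (μ₀:ℂ)) *
        ((1 - Complex.exp (Complex.I * (T:ℂ) * ((μ₀' - μ₀ : ℝ):ℂ)))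
          - (Complex.exp (Complex.I * (T:ℂ) * ((μ₁' - μ₀ : ℝ):ℂ))
            - Complex.exp (Complex.I * (T:ℂ) * ((μ₁ - μ₀ : ℝ):ℂ))))
      = Complex.exp (Complex.I * (T:ℂ) * (μ₀:ℂ))
        - Complex.exp (Complex.I * (T:ℂ) * (μ₀:ℂ)) * Complex.exp (Complex.I * (T:ℂ) * ((μ₀' - μ₀ : ℝ):ℂ))
        - (Complex.exp (Complex.I * (T:ℂ) * (μ₀:ℂ)) * Complex.exp (Complex.I * (T:ℂ) * ((μ₁' - μ₀ : ℝ):ℂ))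
          - Complex.exp (Complex.I * (T:ℂ) * (μ₀:ℂ)) * Complex.exp (Complex.I * (T:ℂ) * ((μ₁ - μ₀ : ℝ):ℂ))) by ring]
    rw [hmul μ₀', hmul μ₁', hmul μ₁]
    ring
  have habs_exp : ∀ (s x : ℝ), ‖Complex.exp (Complex.I * (s:ℂ) * (x:ℂ))‖ = 1 := by
    intro s x
    rw [Complex.norm_exp]
    norm_num [Complex.mul_re, Complex.I_re, Complex.I_im]
  -- bddAbove
  have hbdd : BddAbove (Set.range (fun t : ℝ => Real.exp (-(σ^2 * t^2) / 2) *
      ‖Complex.exp (Complex.I * t * μ₀) + Complex.exp (Complex.I * t * μ₁)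
        - Complex.exp (Complex.I * t * μ₀') - Complex.exp (Complex.I * t * μ₁')‖)) := by
    refine ⟨4, ?_⟩
    rintro x ⟨s, rfl⟩
    have hexp1 : Real.exp (-(σ^2 * s^2) / 2) ≤ 1 := by
      rw [Real.exp_le_one_iff]
      have : (0:ℝ) ≤ σ^2 * s^2 := by positivity
      linarith
    have htri : ‖Complex.exp (Complex.I * s * μ₀) + Complex.exp (Complex.I * s * μ₁)
        - Complex.exp (Complex.I * s * μ₀') - Complex.exp (Complex.I * s * μ₁')‖ ≤ 4 := by
      calc ‖Complex.exp (Complex.I * s * μ₀) + Complex.exp (Complex.I * s * μ₁)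
            - Complex.exp (Complex.I * s * μ₀') - Complex.exp (Complex.I * s * μ₁')‖
          ≤ ‖Complex.exp (Complex.I * s * μ₀) + Complex.exp (Complex.I * s * μ₁)
            - Complex.exp (Complex.I * s * μ₀')‖ + ‖Complex.exp (Complex.I * s * μ₁')‖ := by
            exact norm_sub_le _ _
        _ ≤ (‖Complex.exp (Complex.I * s * μ₀) + Complex.exp (Complex.I * s * μ₁)‖
            + ‖Complex.exp (Complex.I * s * μ₀')‖) + ‖Complex.exp (Complex.I * s * μ₁')‖ := by
            gcongr
            exact norm_sub_le _ _
        _ ≤ ((‖Complex.exp (Complex.I * s * μ₀)‖ + ‖Complex.exp (Complex.I * s * μ₁)‖)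
            + ‖Complex.exp (Complex.I * s * μ₀')‖) + ‖Complex.exp (Complex.I * s * μ₁')‖ := by
            gcongr
            exact norm_add_le _ _
        _ = 4 := by rw [habs_exp, habs_exp, habs_exp, habs_exp]; norm_num
    calc Real.exp (-(σ^2 * s^2) / 2) * ‖_‖ ≤ 1 * 4 :=
          mul_le_mul hexp1 htri (norm_nonneg _) one_pos.le
      _ = 4 := by norm_num
  -- put it together
  rw [ge_iff_le]
  refine le_trans ?_ (le_ciSup hbdd T)
  have hval : Real.exp (-(σ^2 * T^2) / 2) *
      ‖Complex.exp (Complex.I * T * μ₀) + Complex.exp (Complex.I * T * μ₁)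
        - Complex.exp (Complex.I * T * μ₀') - Complex.exp (Complex.I * T * μ₁')‖
      = Real.exp (-(σ^2 * T^2) / 2) * ‖u - w‖ := by
    rw [hfactor, norm_mul, habs_exp T μ₀, one_mul]
  have hexp_lb : Real.exp (-1) ≤ Real.exp (-(σ^2 * T^2) / 2) := by
    rw [Real.exp_le_exp]
    exact exp_arith (mul_pos hσ hT0) hsT
  have hδ0 : 0 ≤ max |μ₀' - μ₀| |μ₁ - μ₁'| := le_trans (abs_nonneg _) (le_max_left _ _)
  have hfin : π^2 * max |μ₀' - μ₀| |μ₁ - μ₁'| / (240 * Real.exp 1 * σ)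
      ≤ Real.exp (-1) * (2/π * (max |μ₀' - μ₀| |μ₁ - μ₁'| / σ)) :=
    final_arith hδ0 hσ
  refine le_trans hfin ?_
  rw [hval]
  calc Real.exp (-1) * (2/π * (max |μ₀' - μ₀| |μ₁ - μ₁'| / σ))
      ≤ Real.exp (-(σ^2 * T^2) / 2) * ‖u - w‖ := by
        apply mul_le_mul hexp_lb hmain (by positivity) (Real.exp_pos _).le
end

section
/- For any vectors v₁, v₂, v₃ ∈ ℝ^d, there exists a vector z ∈ ℝ^d such that z lies in the linear span of v₁, v₂, v₃, ‖z‖₂ ≤ 10, and |⟨z, vᵢ⟩| ≥ ‖vᵢ‖₂ / 6 for each i ∈ {1, 2, 3}. -/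
/-- Euclidean inner product on `Fin d → ℝ`. -/
noncomputable def edot {d : ℕ} (u v : Fin d → ℝ) : ℝ := ∑ i, u i * v i

/-- Euclidean norm on `Fin d → ℝ`. -/
noncomputable def enorm2 {d : ℕ} (v : Fin d → ℝ) : ℝ := Real.sqrt (∑ i, v i ^ 2)

lemma enorm2_eq_norm {d : ℕ} (v : Fin d → ℝ) :
    enorm2 v = ‖(WithLp.equiv 2 (Fin d → ℝ)).symm v‖ := by
  simp [enorm2, EuclideanSpace.norm_eq, Real.norm_eq_abs, sq_abs]

lemma enorm2_add_le {d : ℕ} (x y : Fin d → ℝ) : enorm2 (x + y) ≤ enorm2 x + enorm2 y := by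
  simp only [enorm2_eq_norm]
  rw [show (WithLp.equiv 2 (Fin d → ℝ)).symm (x + y)
      = (WithLp.equiv 2 (Fin d → ℝ)).symm x + (WithLp.equiv 2 (Fin d → ℝ)).symm y from rfl]
  exact norm_add_le _ _

lemma enorm2_smul {d : ℕ} (a : ℝ) (v : Fin d → ℝ) : enorm2 (a • v) = |a| * enorm2 v := by
  simp only [enorm2_eq_norm]
  rw [show (WithLp.equiv 2 (Fin d → ℝ)).symm (a • v)
      = a • (WithLp.equiv 2 (Fin d → ℝ)).symm v from rfl]
  simp [norm_smul, Real.norm_eq_abs]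

lemma edot_add_left {d : ℕ} (x y v : Fin d → ℝ) : edot (x + y) v = edot x v + edot y v := by
  simp [edot, add_mul, Finset.sum_add_distrib]

lemma edot_smul_left {d : ℕ} (a : ℝ) (x v : Fin d → ℝ) : edot (a • x) v = a * edot x v := by
  simp [edot, Finset.mul_sum, mul_assoc]

lemma edot_self {d : ℕ} (v : Fin d → ℝ) : edot v v = (enorm2 v) ^ 2 := by
  rw [enorm2, Real.sq_sqrt (by positivity)]
  simp [edot, sq]

lemma enorm2_pos {d : ℕ} {v : Fin d → ℝ} (hv : v ≠ 0) : 0 < enorm2 v := by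
  rw [enorm2_eq_norm]
  rw [norm_pos_iff]
  simpa using hv

lemma enorm2_nonneg {d : ℕ} (v : Fin d → ℝ) : 0 ≤ enorm2 v := Real.sqrt_nonneg _

lemma edot_comm {d : ℕ} (u v : Fin d → ℝ) : edot u v = edot v u := by
  simp [edot, mul_comm]

lemma edot_smul_right {d : ℕ} (a : ℝ) (x v : Fin d → ℝ) : edot v (a • x) = a * edot v x := by
  rw [edot_comm, edot_smul_left, edot_comm]

lemma edot_zero_right {d : ℕ} (v : Fin d → ℝ) : edot v 0 = 0 := by
  simp [edot]

lemma unit_self {d : ℕ} {v : Fin d → ℝ} (hv : v ≠ 0) :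
    edot ((enorm2 v)⁻¹ • v) ((enorm2 v)⁻¹ • v) = 1 := by
  have hn := enorm2_pos hv
  rw [edot_smul_left, edot_smul_right, edot_self]
  field_simp

lemma unit_norm {d : ℕ} (v : Fin d → ℝ) : enorm2 ((enorm2 v)⁻¹ • v) ≤ 1 := by
  by_cases hv : v = 0
  · simp [hv, enorm2]
  · have hn := enorm2_pos hv
    rw [enorm2_smul, abs_of_pos (by positivity)]
    rw [inv_mul_cancel₀ hn.ne']

lemma spacing_aux : ∀ x ∈ ({-3,-1,1,3} : Finset ℝ), ∀ y ∈ ({-3,-1,1,3} : Finset ℝ),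
    |x - y| < 1/3 → x = y := by
  intro x hx y hy h
  rw [abs_lt] at h
  simp only [Finset.mem_insert, Finset.mem_singleton] at hx hy
  rcases hx with rfl | rfl | rfl | rfl <;> rcases hy with rfl | rfl | rfl | rfl <;>
    (revert h; norm_num)

lemma key_signs (a12 a13 a21 a23 a31 a32 : ℝ) :
    ∃ c : ℝ × ℝ × ℝ,
      c ∈ (({-3,-1,1,3} : Finset ℝ) ×ˢ ({-3,-1,1,3} : Finset ℝ) ×ˢ ({-3,-1,1,3} : Finset ℝ)) ∧
      1/6 ≤ |c.1 + c.2.1 * a21 + c.2.2 * a31| ∧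
      1/6 ≤ |c.2.1 + c.1 * a12 + c.2.2 * a32| ∧
      1/6 ≤ |c.2.2 + c.1 * a13 + c.2.1 * a23| := by
  classical
  set S : Finset ℝ := {-3,-1,1,3} with hSdef
  have hScard : S.card = 4 := by norm_num [hSdef]
  set T : Finset (ℝ × ℝ × ℝ) := S ×ˢ S ×ˢ S with hT
  have hTcard : T.card = 64 := by
    simp [hT, Finset.card_product, hScard]
  set f1 : ℝ × ℝ × ℝ → ℝ := fun c => c.1 + c.2.1 * a21 + c.2.2 * a31 with hf1
  set f2 : ℝ × ℝ × ℝ → ℝ := fun c => c.2.1 + c.1 * a12 + c.2.2 * a32 with hf2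
  set f3 : ℝ × ℝ × ℝ → ℝ := fun c => c.2.2 + c.1 * a13 + c.2.1 * a23 with hf3
  set B1 := T.filter (fun c => |f1 c| < 1/6) with hB1
  set B2 := T.filter (fun c => |f2 c| < 1/6) with hB2
  set B3 := T.filter (fun c => |f3 c| < 1/6) with hB3
  have habs : ∀ u v : ℝ, |u| < 1/6 → |v| < 1/6 → |u - v| < 1/3 := by
    intro u v hu hv
    calc |u - v| ≤ |u| + |v| := abs_sub _ _
    _ < 1/3 := by linarith
  have h1 : B1.card ≤ 16 := by
    have : B1.card ≤ (S ×ˢ S).card := by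
      apply Finset.card_le_card_of_injOn (fun c => c.2)
      · intro c hc
        simp only [hB1, Finset.mem_coe, Finset.mem_filter, hT, Finset.mem_product] at hc
        simp [Finset.mem_product, hc.1.2.1, hc.1.2.2]
      · intro c hc c' hc' hcc
        simp only [Finset.coe_filter, Set.mem_setOf_eq, hB1, hT, Finset.mem_product] at hc hc'
        have heq : f1 c - f1 c' = c.1 - c'.1 := by
          simp only [hf1]
          have hcc' : c.2 = c'.2 := hcc
          rw [show c.2.1 = c'.2.1 from (Prod.ext_iff.mp hcc').1,
              show c.2.2 = c'.2.2 from (Prod.ext_iff.mp hcc').2]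
          ring
        have := habs _ _ hc.2 hc'.2
        rw [heq] at this
        have h1 := spacing_aux c.1 hc.1.1 c'.1 hc'.1.1 this
        exact Prod.ext h1 (show c.2 = c'.2 from hcc)
    simpa [Finset.card_product, hScard] using this
  have h2 : B2.card ≤ 16 := by
    have : B2.card ≤ (S ×ˢ S).card := by
      apply Finset.card_le_card_of_injOn (fun c => (c.1, c.2.2))
      · intro c hc
        simp only [hB2, Finset.mem_coe, Finset.mem_filter, hT, Finset.mem_product] at hc
        simp [Finset.mem_product, hc.1.1, hc.1.2.2]
      · intro c hc c' hc' hcc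
        simp only [Finset.coe_filter, Set.mem_setOf_eq, hB2, hT, Finset.mem_product] at hc hc'
        have hcc' : (c.1, c.2.2) = (c'.1, c'.2.2) := hcc
        have e1 : c.1 = c'.1 := (Prod.ext_iff.mp hcc').1
        have e2 : c.2.2 = c'.2.2 := (Prod.ext_iff.mp hcc').2
        have heq : f2 c - f2 c' = c.2.1 - c'.2.1 := by
          simp only [hf2]; rw [e1, e2]; ring
        have := habs _ _ hc.2 hc'.2
        rw [heq] at this
        have h1 := spacing_aux c.2.1 hc.1.2.1 c'.2.1 hc'.1.2.1 this
        exact Prod.ext e1 (Prod.ext h1 e2)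
    simpa [Finset.card_product, hScard] using this
  have h3 : B3.card ≤ 16 := by
    have : B3.card ≤ (S ×ˢ S).card := by
      apply Finset.card_le_card_of_injOn (fun c => (c.1, c.2.1))
      · intro c hc
        simp only [hB3, Finset.mem_coe, Finset.mem_filter, hT, Finset.mem_product] at hc
        simp [Finset.mem_product, hc.1.1, hc.1.2.1]
      · intro c hc c' hc' hcc
        simp only [Finset.coe_filter, Set.mem_setOf_eq, hB3, hT, Finset.mem_product] at hc hc'
        have hcc' : (c.1, c.2.1) = (c'.1, c'.2.1) := hcc
        have e1 : c.1 = c'.1 := (Prod.ext_iff.mp hcc').1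
        have e2 : c.2.1 = c'.2.1 := (Prod.ext_iff.mp hcc').2
        have heq : f3 c - f3 c' = c.2.2 - c'.2.2 := by
          simp only [hf3]; rw [e1, e2]; ring
        have := habs _ _ hc.2 hc'.2
        rw [heq] at this
        have h1 := spacing_aux c.2.2 hc.1.2.2 c'.2.2 hc'.1.2.2 this
        exact Prod.ext e1 (Prod.ext e2 h1)
    simpa [Finset.card_product, hScard] using this
  have hU : (B1 ∪ B2 ∪ B3).card ≤ 48 := by
    calc (B1 ∪ B2 ∪ B3).card ≤ (B1 ∪ B2).card + B3.card := Finset.card_union_le _ _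
    _ ≤ B1.card + B2.card + B3.card := by
        have := Finset.card_union_le B1 B2; omega
    _ ≤ 48 := by omega
  have hsub : ¬ T ⊆ (B1 ∪ B2 ∪ B3) := by
    intro h
    have := Finset.card_le_card h
    omega
  obtain ⟨c, hcT, hc⟩ := Finset.not_subset.mp hsub
  simp only [Finset.mem_union, not_or] at hc
  refine ⟨c, hcT, ?_, ?_, ?_⟩
  · have := hc.1.1
    rw [hB1, Finset.mem_filter] at this
    push_neg at this
    exact this hcT
  · have := hc.1.2
    rw [hB2, Finset.mem_filter] at this
    push_neg at this
    exact this hcT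
  · have := hc.2
    rw [hB3, Finset.mem_filter] at this
    push_neg at this
    exact this hcT

theorem stmt_14 (d : ℕ) (v₁ v₂ v₃ : Fin d → ℝ) :
    ∃ z : Fin d → ℝ, z ∈ Submodule.span ℝ ({v₁, v₂, v₃} : Set (Fin d → ℝ)) ∧
      enorm2 z ≤ 10 ∧
      ∀ v ∈ ({v₁, v₂, v₃} : Set (Fin d → ℝ)), |edot z v| ≥ enorm2 v / 6 := by
  classical
  set u1 : Fin d → ℝ := (enorm2 v₁)⁻¹ • v₁ with hu1
  set u2 : Fin d → ℝ := (enorm2 v₂)⁻¹ • v₂ with hu2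
  set u3 : Fin d → ℝ := (enorm2 v₃)⁻¹ • v₃ with hu3
  obtain ⟨c, hcT, hk1, hk2, hk3⟩ := key_signs (edot u1 u2) (edot u1 u3) (edot u2 u1)
    (edot u2 u3) (edot u3 u1) (edot u3 u2)
  set z : Fin d → ℝ := c.1 • u1 + c.2.1 • u2 + c.2.2 • u3 with hz
  -- coefficient bounds
  simp only [Finset.mem_product, Finset.mem_insert, Finset.mem_singleton] at hcT
  have hc1 : |c.1| ≤ 3 := by rcases hcT.1 with h | h | h | h <;> rw [h] <;> norm_num
  have hc2 : |c.2.1| ≤ 3 := by rcases hcT.2.1 with h | h | h | h <;> rw [h] <;> norm_num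
  have hc3 : |c.2.2| ≤ 3 := by rcases hcT.2.2 with h | h | h | h <;> rw [h] <;> norm_num
  have hnn1 := enorm2_nonneg v₁
  refine ⟨z, ?_, ?_, ?_⟩
  · apply Submodule.add_mem
    apply Submodule.add_mem
    · exact Submodule.smul_mem _ _ (Submodule.smul_mem _ _
        (Submodule.subset_span (by simp)))
    · exact Submodule.smul_mem _ _ (Submodule.smul_mem _ _
        (Submodule.subset_span (by simp)))
    · exact Submodule.smul_mem _ _ (Submodule.smul_mem _ _
        (Submodule.subset_span (by simp)))
  · have s1 : enorm2 (c.1 • u1) = |c.1| * enorm2 u1 := enorm2_smul _ _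
    have s2 : enorm2 (c.2.1 • u2) = |c.2.1| * enorm2 u2 := enorm2_smul _ _
    have s3 : enorm2 (c.2.2 • u3) = |c.2.2| * enorm2 u3 := enorm2_smul _ _
    have e1 : enorm2 u1 ≤ 1 := by rw [hu1]; exact unit_norm v₁
    have e2 : enorm2 u2 ≤ 1 := by rw [hu2]; exact unit_norm v₂
    have e3 : enorm2 u3 ≤ 1 := by rw [hu3]; exact unit_norm v₃
    have n1 := enorm2_nonneg u1; have n2 := enorm2_nonneg u2; have n3 := enorm2_nonneg u3
    have a1 := abs_nonneg c.1; have a2 := abs_nonneg c.2.1; have a3 := abs_nonneg c.2.2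
    have t1 := enorm2_add_le (c.1 • u1 + c.2.1 • u2) (c.2.2 • u3)
    have t2 := enorm2_add_le (c.1 • u1) (c.2.1 • u2)
    have m1 : |c.1| * enorm2 u1 ≤ 3 := by nlinarith
    have m2 : |c.2.1| * enorm2 u2 ≤ 3 := by nlinarith
    have m3 : |c.2.2| * enorm2 u3 ≤ 3 := by nlinarith
    rw [hz]
    linarith [s1, s2, s3]
  · have hzdot : ∀ w : Fin d → ℝ,
        edot z w = c.1 * edot u1 w + c.2.1 * edot u2 w + c.2.2 * edot u3 w := by
      intro w
      rw [hz, edot_add_left, edot_add_left, edot_smul_left c.1 u1 w, edot_smul_left c.2.1 u2 w, edot_smul_left c.2.2 u3 w]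
    intro v hv
    have main : ∀ (vv uu : Fin d → ℝ), vv ≠ 0 → uu = (enorm2 vv)⁻¹ • vv →
        1/6 ≤ |edot z uu| → |edot z vv| ≥ enorm2 vv / 6 := by
      intro vv uu hvv huu hb
      have hn := enorm2_pos hvv
      have hvvu : vv = enorm2 vv • uu := by
        rw [huu, smul_smul, mul_inv_cancel₀ hn.ne', one_smul]
      calc |edot z vv| = |enorm2 vv * edot z uu| := by nth_rewrite 1 [hvvu]; rw [edot_smul_right]
      _ = enorm2 vv * |edot z uu| := by rw [abs_mul, abs_of_pos hn]
      _ ≥ enorm2 vv * (1/6) := mul_le_mul_of_nonneg_left hb hn.le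
      _ = enorm2 vv / 6 := by ring
    rcases hv with rfl | rfl | rfl
    · by_cases h0 : v = 0
      · simp [h0, edot_zero_right, enorm2]
      · apply main v u1 h0 hu1
        have hself : edot u1 u1 = 1 := by rw [hu1]; exact unit_self h0
        rw [hzdot u1, hself, mul_one]
        exact hk1
    · by_cases h0 : v = 0
      · simp [h0, edot_zero_right, enorm2]
      · apply main v u2 h0 hu2
        have hself : edot u2 u2 = 1 := by rw [hu2]; exact unit_self h0
        rw [hzdot u2, hself, mul_one]
        calc (1:ℝ)/6 ≤ |c.2.1 + c.1 * edot u1 u2 + c.2.2 * edot u3 u2| := hk2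
        _ = |c.1 * edot u1 u2 + c.2.1 + c.2.2 * edot u3 u2| := by ring_nf
    · by_cases h0 : v = 0
      · simp [h0, edot_zero_right, enorm2]
      · apply main v u3 h0 hu3
        have hself : edot u3 u3 = 1 := by rw [hu3]; exact unit_self h0
        rw [hzdot u3, hself, mul_one]
        calc (1:ℝ)/6 ≤ |c.2.2 + c.1 * edot u1 u3 + c.2.1 * edot u2 u3| := hk3
        _ = |c.1 * edot u1 u3 + c.2.1 * edot u2 u3 + c.2.2| := by ring_nf
end

section
/- For all real numbers x, y with 0 ≤ y ≤ x ≤ π/4, it holds that −sin(x + y) + 2·sin(x) ≥ sin((x − y)/2) · cos(y/2). -/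
open Real

theorem stmt_15 (x y : ℝ) (hy : 0 ≤ y) (hyx : y ≤ x) (hx : x ≤ π/4) :
    -Real.sin (x + y) + 2 * Real.sin x ≥ Real.sin ((x - y)/2) * Real.cos (y/2) := by
  have hpi := Real.pi_gt_three
  have hs0 : 0 ≤ Real.sin ((x - y)/2) := by
    apply Real.sin_nonneg_of_nonneg_of_le_pi <;> nlinarith
  have hsx : 0 ≤ Real.sin x := by
    apply Real.sin_nonneg_of_nonneg_of_le_pi <;> nlinarith
  have hc1 : Real.cos (y/2) ≤ 1 := Real.cos_le_one _
  have hch : (1:ℝ)/2 ≤ Real.cos ((x - y)/2) := by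
    have h := Real.one_sub_sq_div_two_le_cos (x := (x - y)/2)
    have hp : π < 3.15 := Real.pi_lt_d2
    nlinarith [sq_nonneg (x - y), mul_le_mul hyx hyx hy (le_trans hy hyx)]
  have h2 : Real.sin ((x - y)/2) ≤ Real.sin (x - y) := by
    have : Real.sin (x - y) = 2 * Real.sin ((x - y)/2) * Real.cos ((x - y)/2) := by
      have h := Real.sin_two_mul ((x - y)/2)
      rw [show 2 * ((x - y)/2) = x - y by ring] at h
      exact h
    nlinarith
  have h3 : Real.sin (x + y) + Real.sin (x - y) = 2 * Real.sin x * Real.cos y := by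
    rw [Real.sin_add, Real.sin_sub]; ring
  have hcy : Real.cos y ≤ 1 := Real.cos_le_one _
  nlinarith [mul_le_of_le_one_right hs0 hc1]
end

section
/- For all real numbers x, y with 0 ≤ y ≤ x ≤ π/4, it holds that −1 − cos(x) + cos(y) + cos(x − y) ≥ (x − y)·y / 2. -/
open Real

lemma aux_id_16 (a b : ℝ) :
    -1 - Real.cos (2*(a+b)) + Real.cos (2*b) + Real.cos (2*a)
      = 4 * Real.sin a * Real.sin b * Real.cos (a + b) := by
  rw [Real.cos_two_mul, Real.cos_two_mul, Real.cos_two_mul, Real.cos_add]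
  nlinarith [Real.sin_sq_add_cos_sq a, Real.sin_sq_add_cos_sq b]

lemma aux_ineq_16 (a b : ℝ) (ha0 : 0 ≤ a) (hb0 : 0 ≤ b) (hab : a + b ≤ 0.394) :
    2 * a * b ≤ 4 * Real.sin a * Real.sin b * Real.cos (a + b) := by
  rcases eq_or_lt_of_le ha0 with ha | ha
  · rw [← ha]; simp
  rcases eq_or_lt_of_le hb0 with hb | hb
  · rw [← hb]; simp
  have ha1 : a ≤ 1 := by linarith
  have hb1 : b ≤ 1 := by linarith
  have hsa : a - a ^ 3 / 4 < Real.sin a := by have := Real.sin_gt_sub_cube ha; linarith [pow_pos ha 3]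
  have hsb : b - b ^ 3 / 4 < Real.sin b := by have := Real.sin_gt_sub_cube hb; linarith [pow_pos hb 3]
  have hca : 1 - (a + b) ^ 2 / 2 ≤ Real.cos (a + b) :=
    Real.one_sub_sq_div_two_le_cos
  have haU : a ≤ 0.394 := by linarith
  have hbU : b ≤ 0.394 := by linarith
  have hsa' : 0.961 * a ≤ Real.sin a := by nlinarith [sq_nonneg a, mul_nonneg ha.le ha.le]
  have hsb' : 0.961 * b ≤ Real.sin b := by nlinarith [sq_nonneg b, mul_nonneg hb.le hb.le]
  have hca' : (0.92 : ℝ) ≤ Real.cos (a + b) := by nlinarith [sq_nonneg (a+b)]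
  have hsa0 : 0 < Real.sin a := by nlinarith
  have hsb0 : 0 < Real.sin b := by nlinarith
  have s1 : (0.961 * a) * (0.961 * b) ≤ Real.sin a * Real.sin b :=
    mul_le_mul hsa' hsb' (by positivity) hsa0.le
  have s2 : Real.sin a * Real.sin b * 0.92 ≤ Real.sin a * Real.sin b * Real.cos (a + b) :=
    mul_le_mul_of_nonneg_left hca' (by positivity)
  nlinarith [s1, s2, mul_pos ha hb]

theorem stmt_16 (x y : ℝ) (hy : 0 ≤ y) (hyx : y ≤ x) (hx : x ≤ π/4) :
    -1 - Real.cos x + Real.cos y + Real.cos (x - y) ≥ (x - y) * y / 2 := by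
  have hpi2 : π ≤ 3.15 := le_of_lt Real.pi_lt_d2
  have ha0 : 0 ≤ (x - y) / 2 := by linarith
  have hb0 : 0 ≤ y / 2 := by linarith
  have hab : (x - y) / 2 + y / 2 ≤ 0.394 := by
    have : (x - y) / 2 + y / 2 = x / 2 := by ring
    rw [this]; linarith
  have hid := aux_id_16 ((x - y) / 2) (y / 2)
  have e1 : 2 * ((x - y) / 2 + y / 2) = x := by ring
  have e2 : 2 * (y / 2) = y := by ring
  have e3 : 2 * ((x - y) / 2) = x - y := by ring
  rw [e1, e2, e3] at hid
  have hkey := aux_ineq_16 ((x - y) / 2) (y / 2) ha0 hb0 hab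
  rw [hid]
  have : (x - y) * y / 2 = 2 * ((x - y) / 2) * (y / 2) := by ring
  rw [this]
  exact hkey
end

section
/- Let μ₀, μ₁, μ₀′, μ₁′ ∈ ℝ with μ₀ ≤ min(μ₁, μ₀′, μ₁′) and μ₀′ ≤ μ₁′, and let σ > 0. Suppose max(|μ₁′−μ₀|, |μ₁−μ₀|, |μ₀′−μ₀|) ≤ 100σ, and μ₀′ ∈ [μ₀, μ₁] and μ₁′ ∈ [μ₀, μ₁]. Then ‖f_{μ₀,μ₁} − f_{μ₀′,μ₁′}‖_TV ≥ π²·δ₁·δ₂ / (5120000·e·σ²). -/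
open MeasureTheory ProbabilityTheory Real
open scoped ENNReal NNReal

section Aux

open Complex

lemma key_integral' (c d μ : ℝ) {v : ℝ≥0} (hv : 0 < (v:ℝ)) :
    ∫ x : ℝ, Real.cos (c * x + d) * gaussianPDFReal μ v x
      = Real.exp (-(v:ℝ) * c ^ 2 / 2) * Real.cos (c * μ + d) := by
  have hv0 : (v:ℂ) ≠ 0 := by exact_mod_cast hv.ne'
  set b : ℂ := ((-(2 * (v:ℝ))⁻¹ : ℝ) : ℂ) with hb_def
  have hb : b.re < 0 := by
    simp only [hb_def, Complex.ofReal_re]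
    have : 0 < (2 * (v:ℝ))⁻¹ := by positivity
    linarith
  set c' : ℂ := ((μ/(v:ℝ) : ℝ) : ℂ) + (c:ℂ) * I with hc_def
  set d' : ℂ := ((-(μ^2/(2*(v:ℝ))) : ℝ) : ℂ) + (d:ℂ) * I with hd_def
  have hre : ∀ x : ℝ, (b*(x:ℂ)^2 + c'*x + d').re = -(x-μ)^2/(2*(v:ℝ)) := by
    intro x
    simp only [hb_def, hc_def, hd_def, Complex.add_re, Complex.mul_re, Complex.ofReal_re,
      Complex.ofReal_im, Complex.I_re, Complex.I_im, Complex.add_im, Complex.mul_im,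
      Complex.ofReal_pow, ← Complex.ofReal_pow, Complex.ofReal_re, Complex.ofReal_im]
    field_simp
    ring
  have him : ∀ x : ℝ, (b*(x:ℂ)^2 + c'*x + d').im = c*x + d := by
    intro x
    simp only [hb_def, hc_def, hd_def, Complex.add_im, Complex.mul_im, Complex.ofReal_re,
      Complex.ofReal_im, Complex.I_re, Complex.I_im, Complex.add_re, Complex.mul_re,
      ← Complex.ofReal_pow]
    simp
  have hF : ∀ x : ℝ, Real.cos (c*x+d) * gaussianPDFReal μ v x
      = ((((Real.sqrt (2*π*(v:ℝ)))⁻¹ : ℝ) : ℂ) * cexp (b*(x:ℂ)^2 + c'*x + d')).re := by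
    intro x
    rw [Complex.mul_re]
    simp only [Complex.ofReal_re, Complex.ofReal_im, zero_mul, sub_zero]
    rw [Complex.exp_re, hre, him]
    rw [gaussianPDFReal]
    ring
  have hInt : Integrable (fun x : ℝ => cexp (b*(x:ℂ)^2 + c'*x + d')) := by
    apply integrable_cexp_quadratic' hb
  have hs : (0:ℝ) < Real.sqrt (2*π*(v:ℝ)) := Real.sqrt_pos.mpr (by positivity)
  calc ∫ x : ℝ, Real.cos (c * x + d) * gaussianPDFReal μ v x
      = ∫ x : ℝ, ((((Real.sqrt (2*π*(v:ℝ)))⁻¹ : ℝ) : ℂ) * cexp (b*(x:ℂ)^2 + c'*x + d')).re := by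
        simp_rw [hF]
    _ = (∫ x : ℝ, (((Real.sqrt (2*π*(v:ℝ)))⁻¹ : ℝ) : ℂ) * cexp (b*(x:ℂ)^2 + c'*x + d')).re := by
        exact integral_re (hInt.const_mul _)
    _ = Real.exp (-(v:ℝ) * c ^ 2 / 2) * Real.cos (c * μ + d) := by
        rw [integral_const_mul, integral_cexp_quadratic hb c' d']
        have h1 : (↑π / -b) = ((2*π*(v:ℝ) : ℝ) : ℂ) := by
          rw [hb_def]
          push_cast
          rw [neg_neg, div_inv_eq_mul]
          ring
        have h2 : ((2*π*(v:ℝ) : ℝ) : ℂ) ^ (1/2 : ℂ) = ((Real.sqrt (2*π*(v:ℝ)) : ℝ) : ℂ) := by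
          have hnn : (0:ℝ) ≤ 2*π*(v:ℝ) := by positivity
          rw [show (1/2 : ℂ) = ((1/2 : ℝ) : ℂ) by norm_num, ← Complex.ofReal_cpow hnn]
          norm_cast
          rw [Real.sqrt_eq_rpow]
        have h3 : d' - c'^2/(4*b) = ((-(v:ℝ)*c^2/2 : ℝ) : ℂ) + ((c*μ+d : ℝ) : ℂ)*I := by
          rw [hb_def, hc_def, hd_def]
          push_cast
          field_simp
          ring_nf
          linear_combination (4*((v:ℝ):ℂ)^2*(c:ℂ)^2) * Complex.I_sq
        rw [h1, h2, h3, ← mul_assoc, ← Complex.ofReal_mul, inv_mul_cancel₀ hs.ne',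
          Complex.ofReal_one, one_mul, Complex.exp_re]
        simp [← Complex.ofReal_pow]

end Aux

lemma trigT (u v g : ℝ) :
    (Real.cos ((u-v-2*g)/4) + Real.cos ((u-v+2*g)/4))
      - (Real.cos ((3*u+v+2*g)/4) + Real.cos ((u+3*v+2*g)/4))
    = 4 * Real.cos ((u-v)/4) * (Real.sin ((u+v+2*g)/4) * Real.sin ((u+v)/4)) := by
  have e1 : Real.cos ((u-v+2*g)/4) + Real.cos ((u-v-2*g)/4)
      = 2 * Real.cos ((u-v)/4) * Real.cos (g/2) := by
    rw [Real.cos_add_cos]; ring_nf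
  have e2 : Real.cos ((3*u+v+2*g)/4) + Real.cos ((u+3*v+2*g)/4)
      = 2 * Real.cos ((u+v+g)/2) * Real.cos ((u-v)/4) := by
    rw [Real.cos_add_cos]; ring_nf
  have e3 : Real.cos ((u+v+g)/2) - Real.cos (g/2)
      = -2 * Real.sin ((u+v+2*g)/4) * Real.sin ((u+v)/4) := by
    rw [Real.cos_sub_cos]; ring_nf
  linear_combination e1 - e2 - (2*Real.cos ((u-v)/4)) * e3

lemma trig_lower (u v g : ℝ) (hu : 0 ≤ u) (hv : 0 ≤ v) (hg : 0 ≤ g)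
    (hX : u + v + g ≤ π) :
    (u+v+g) * max u v / (2*π^2)
      ≤ 4 * Real.cos ((u-v)/4) * (Real.sin ((u+v+2*g)/4) * Real.sin ((u+v)/4)) := by
  have hπ := Real.pi_pos
  have hπ4 := Real.pi_le_four
  have hc : (1:ℝ)/2 ≤ Real.cos ((u-v)/4) := by
    have h1 := Real.one_sub_sq_div_two_le_cos (x := (u-v)/4)
    have h2 : ((u-v)/4)^2 ≤ (π/4)^2 := by
      have : |u - v| ≤ π := by
        rw [abs_le]; constructor <;> nlinarith
      nlinarith [abs_nonneg (u-v), sq_abs (u-v)]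
    nlinarith
  have hs1 : (u+v+g)/(2*π) ≤ Real.sin ((u+v+2*g)/4) := by
    have h1 := Real.mul_le_sin (x := (u+v+2*g)/4) (by positivity) (by linarith)
    have h2 : (2/π)*((u+v+2*g)/4) - (u+v+g)/(2*π) = g/(2*π) := by
      field_simp; ring
    have h3 : 0 ≤ g/(2*π) := by positivity
    linarith
  have hs2 : max u v/(2*π) ≤ Real.sin ((u+v)/4) := by
    have h1 := Real.mul_le_sin (x := (u+v)/4) (by positivity) (by linarith)
    have h2 : (2/π)*((u+v)/4) - max u v/(2*π) = (u + v - max u v)/(2*π) := by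
      field_simp; ring
    have h3 : 0 ≤ (u + v - max u v)/(2*π) := by
      have h4 : max u v ≤ u + v := max_le (by linarith) (by linarith)
      apply div_nonneg (by linarith) (by positivity)
    linarith
  have hX0 : 0 ≤ (u+v+g)/(2*π) := by positivity
  have hY0 : 0 ≤ max u v/(2*π) := by positivity
  have hs10 : 0 ≤ Real.sin ((u+v+2*g)/4) := le_trans hX0 hs1
  have hs20 : 0 ≤ Real.sin ((u+v)/4) := le_trans hY0 hs2
  have p1 : (u+v+g)/(2*π) * (max u v/(2*π))
      ≤ Real.sin ((u+v+2*g)/4) * Real.sin ((u+v)/4) :=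
    mul_le_mul hs1 hs2 hY0 hs10
  have key : (u+v+g) * max u v / (2*π^2) = 2 * ((u+v+g)/(2*π) * (max u v/(2*π))) := by
    field_simp
  rw [key]
  nlinarith [mul_nonneg hs10 hs20]

lemma mix_apply (m₀ m₁ : ℝ) {v : ℝ≥0} (hv : v ≠ 0) (A : Set ℝ) :
    ((mix1v m₀ m₁ v) A).toReal
      = ∫ x in A, (gaussianPDFReal m₀ v x + gaussianPDFReal m₁ v x)/2 := by
  have h0 := gaussianReal_apply_eq_integral m₀ hv A
  have h1 := gaussianReal_apply_eq_integral m₁ hv A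
  have hadd : (mix1v m₀ m₁ v) A
      = (1/2 : ℝ≥0∞) * gaussianReal m₀ v A + (1/2 : ℝ≥0∞) * gaussianReal m₁ v A := by
    simp [mix1v]
  rw [hadd, h0, h1, ENNReal.toReal_add (ENNReal.mul_ne_top (by norm_num) ENNReal.ofReal_ne_top)
    (ENNReal.mul_ne_top (by norm_num) ENNReal.ofReal_ne_top)]
  rw [ENNReal.toReal_mul, ENNReal.toReal_mul,
    ENNReal.toReal_ofReal (integral_nonneg fun x => gaussianPDFReal_nonneg _ _ _),
    ENNReal.toReal_ofReal (integral_nonneg fun x => gaussianPDFReal_nonneg _ _ _)]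
  rw [integral_div, integral_add ((integrable_gaussianPDFReal m₀ v).restrict)
    ((integrable_gaussianPDFReal m₁ v).restrict)]
  norm_num
  ring


lemma aux_pi_sq : π^2 ≤ 16 := by nlinarith [Real.pi_le_four, Real.pi_pos]

lemma aux_mul_neg (c t : ℝ) (hc : c ≤ 1) (ht : t ≤ 0) : -c * t ≤ -t := by
  have h := mul_le_mul_of_nonpos_right (neg_le_neg hc) ht
  linarith

lemma aux_num (K : ℝ) (hK : 0 ≤ K) : π^2 * K * 80000 ≤ K * 5120000 := by
  nlinarith [aux_pi_sq]

set_option maxHeartbeats 1000000 in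
theorem stmt_17 (μ₀ μ₁ μ₀' μ₁' σ : ℝ) (hσ : 0 < σ)
    (h0 : μ₀ ≤ min μ₁ (min μ₀' μ₁')) (h1 : μ₀' ≤ μ₁')
    (hball : max |μ₁' - μ₀| (max |μ₁ - μ₀| |μ₀' - μ₀|) ≤ 100 * σ)
    (hin : μ₀' ∈ Set.Icc μ₀ μ₁ ∧ μ₁' ∈ Set.Icc μ₀ μ₁) :
    tvDist (mix1d μ₀ μ₁ σ) (mix1d μ₀' μ₁' σ) ≥
      π^2 * max |μ₀ - μ₁| |μ₀' - μ₁'| * max |μ₀' - μ₀| |μ₁ - μ₁'| /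
        (5120000 * Real.exp 1 * σ^2) := by
  obtain ⟨⟨h00', _⟩, ⟨_, h1'1⟩⟩ := hin
  have h01 : μ₀ ≤ μ₁ := le_trans h0 (min_le_left _ _)
  have hπ := Real.pi_pos
  have hπ4 := Real.pi_le_four
  set v : ℝ≥0 := (⟨σ^2, sq_nonneg σ⟩ : ℝ≥0) with hv_def
  have hvR : (v:ℝ) = σ^2 := rfl
  have hvpos : 0 < (v:ℝ) := by rw [hvR]; positivity
  have hvne : v ≠ 0 := by
    intro h
    rw [h] at hvpos
    simp at hvpos
  set ω : ℝ := π / (100*σ) with hω_def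
  have hωpos : 0 < ω := by positivity
  set u : ℝ := ω*(μ₀' - μ₀) with hu_def
  set w : ℝ := ω*(μ₁ - μ₁') with hw_def
  set gg : ℝ := ω*(μ₁' - μ₀') with hgg_def
  set φ : ℝ := ω*μ₀ + (3*u + w + 2*gg)/4 with hφ_def
  have hu0 : 0 ≤ u := mul_nonneg hωpos.le (by linarith)
  have hw0 : 0 ≤ w := mul_nonneg hωpos.le (by linarith)
  have hgg0 : 0 ≤ gg := mul_nonneg hωpos.le (by linarith)
  have hd100 : μ₁ - μ₀ ≤ 100*σ := by
    have h2 : |μ₁ - μ₀| ≤ 100*σ :=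
      le_trans (le_trans (le_max_left _ _) (le_max_right _ _)) hball
    rw [abs_of_nonneg (by linarith)] at h2
    exact h2
  have hXeq : u + w + gg = ω*(μ₁ - μ₀) := by rw [hu_def, hw_def, hgg_def]; ring
  have hXπ : u + w + gg ≤ π := by
    rw [hXeq]
    have h2 := mul_le_mul_of_nonneg_left hd100 hωpos.le
    have h3 : ω * (100*σ) = π := by rw [hω_def]; field_simp
    linarith
  -- densities
  set p : ℝ → ℝ := fun x => (gaussianPDFReal μ₀ v x + gaussianPDFReal μ₁ v x)/2 with hp_def
  set q : ℝ → ℝ := fun x => (gaussianPDFReal μ₀' v x + gaussianPDFReal μ₁' v x)/2 with hq_def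
  have hp_int : Integrable p :=
    ((integrable_gaussianPDFReal μ₀ v).add (integrable_gaussianPDFReal μ₁ v)).div_const 2
  have hq_int : Integrable q :=
    ((integrable_gaussianPDFReal μ₀' v).add (integrable_gaussianPDFReal μ₁' v)).div_const 2
  have ht_int : Integrable (fun x => p x - q x) := hp_int.sub hq_int
  have hp_meas : Measurable p :=
    ((measurable_gaussianPDFReal μ₀ v).add (measurable_gaussianPDFReal μ₁ v)).div_const 2
  have hq_meas : Measurable q :=
    ((measurable_gaussianPDFReal μ₀' v).add (measurable_gaussianPDFReal μ₁' v)).div_const 2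
  set A : Set ℝ := {x | q x ≤ p x} with hA_def
  have hA : MeasurableSet A := measurableSet_le hq_meas hp_meas
  have hp1 : ∫ x, p x = 1 := by
    rw [hp_def]
    rw [integral_div, integral_add (integrable_gaussianPDFReal μ₀ v)
      (integrable_gaussianPDFReal μ₁ v), integral_gaussianPDFReal_eq_one μ₀ hvne,
      integral_gaussianPDFReal_eq_one μ₁ hvne]
    norm_num
  have hq1 : ∫ x, q x = 1 := by
    rw [hq_def]
    rw [integral_div, integral_add (integrable_gaussianPDFReal μ₀' v)
      (integrable_gaussianPDFReal μ₁' v), integral_gaussianPDFReal_eq_one μ₀' hvne,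
      integral_gaussianPDFReal_eq_one μ₁' hvne]
    norm_num
  have htotal : ∫ x, (p x - q x) = 0 := by
    rw [integral_sub hp_int hq_int, hp1, hq1]; ring
  -- tvDist lower bound via the set A
  have huniv : ∀ m0 m1 : ℝ, (mix1d m0 m1 σ) Set.univ = 1 := by
    intro m0 m1
    rw [show mix1d m0 m1 σ = mix1v m0 m1 v from rfl]
    simp [mix1v, Measure.add_apply, Measure.smul_apply, smul_eq_mul, measure_univ]
    exact ENNReal.inv_two_add_inv_two
  have hTV : ((mix1d μ₀ μ₁ σ) A).toReal - ((mix1d μ₀' μ₁' σ) A).toReal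
      ≤ tvDist (mix1d μ₀ μ₁ σ) (mix1d μ₀' μ₁' σ) := by
    have hb : BddAbove (Set.range fun B : {B : Set ℝ // MeasurableSet B} =>
        (((mix1d μ₀ μ₁ σ) B.1).toReal - ((mix1d μ₀' μ₁' σ) B.1).toReal)) := by
      refine ⟨1, ?_⟩
      rintro x ⟨B, rfl⟩
      have hm : (mix1d μ₀ μ₁ σ) B.1 ≤ 1 := by
        rw [← huniv μ₀ μ₁]
        exact measure_mono (Set.subset_univ _)
      have h1' : ((mix1d μ₀ μ₁ σ) B.1).toReal ≤ 1 := by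
        have := ENNReal.toReal_mono ENNReal.one_ne_top hm
        simpa using this
      have h2 : 0 ≤ ((mix1d μ₀' μ₁' σ) B.1).toReal := ENNReal.toReal_nonneg
      simp only
      linarith
    exact le_ciSup hb ⟨A, hA⟩
  have e1 : ((mix1d μ₀ μ₁ σ) A).toReal = ∫ x in A, p x := by
    rw [show mix1d μ₀ μ₁ σ = mix1v μ₀ μ₁ v from rfl]
    exact mix_apply μ₀ μ₁ hvne A
  have e2 : ((mix1d μ₀' μ₁' σ) A).toReal = ∫ x in A, q x := by
    rw [show mix1d μ₀' μ₁' σ = mix1v μ₀' μ₁' v from rfl]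
    exact mix_apply μ₀' μ₁' hvne A
  have e3 : ((mix1d μ₀ μ₁ σ) A).toReal - ((mix1d μ₀' μ₁' σ) A).toReal
      = ∫ x in A, (p x - q x) := by
    rw [e1, e2, integral_sub hp_int.restrict hq_int.restrict]
  -- the test function
  set gfun : ℝ → ℝ := fun x => -Real.cos (ω*x + -φ) with hgfun_def
  have hcos_int : ∀ m : ℝ, Integrable (fun x => Real.cos (ω*x + -φ) * gaussianPDFReal m v x) := by
    intro m
    apply Integrable.bdd_mul (c := 1) (integrable_gaussianPDFReal m v)
    · exact (Real.continuous_cos.comp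
        ((continuous_const.mul continuous_id).add continuous_const)).aestronglyMeasurable
    · exact Filter.Eventually.of_forall fun x => by rw [Real.norm_eq_abs]; exact Real.abs_cos_le_one _
  have hg_int : Integrable (fun x => gfun x * (p x - q x)) := by
    apply Integrable.bdd_mul (c := 1) ht_int
    · exact ((Real.continuous_cos.comp
        ((continuous_const.mul continuous_id).add continuous_const)).neg).aestronglyMeasurable
    · exact Filter.Eventually.of_forall fun x => by
        rw [hgfun_def, Real.norm_eq_abs, abs_neg]; exact Real.abs_cos_le_one _
  -- comparison with the set integral
  have hcompare : ∫ x, gfun x * (p x - q x) ≤ 2 * ∫ x in A, (p x - q x) := by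
    have hsplit : (∫ x in A, gfun x * (p x - q x)) + ∫ x in Aᶜ, gfun x * (p x - q x)
        = ∫ x, gfun x * (p x - q x) := integral_add_compl hA hg_int
    have hsplit2 : (∫ x in A, (p x - q x)) + ∫ x in Aᶜ, (p x - q x)
        = ∫ x, (p x - q x) := integral_add_compl hA ht_int
    have hA_le : ∫ x in A, gfun x * (p x - q x) ≤ ∫ x in A, (p x - q x) := by
      apply setIntegral_mono_on hg_int.integrableOn ht_int.integrableOn hA
      intro x hx
      have hx' : q x ≤ p x := hx
      have hc1 : gfun x ≤ 1 := by
        have h5 : -1 ≤ Real.cos (ω*x + -φ) := Real.neg_one_le_cos _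
        have h6 : gfun x = -Real.cos (ω*x + -φ) := rfl
        rw [h6]; linarith
      exact mul_le_of_le_one_left (by linarith) hc1
    have hAc_le : ∫ x in Aᶜ, gfun x * (p x - q x) ≤ ∫ x in Aᶜ, -(p x - q x) := by
      have hneg_int : Integrable (fun x => -(p x - q x)) := ht_int.neg
      apply setIntegral_mono_on hg_int.integrableOn hneg_int.integrableOn hA.compl
      intro x hx
      have hx' : p x < q x := by
        simp only [hA_def, Set.mem_compl_iff, Set.mem_setOf_eq, not_le] at hx
        exact hx
      have hc1 : -1 ≤ Real.cos (ω*x + -φ) := Real.neg_one_le_cos _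
      have hc2 : Real.cos (ω*x + -φ) ≤ 1 := Real.cos_le_one _
      have hgfx : gfun x = -Real.cos (ω*x + -φ) := rfl
      rw [hgfx]
      exact aux_mul_neg _ _ hc2 (by linarith)
    have hneg : ∫ x in Aᶜ, -(p x - q x) = - ∫ x in Aᶜ, (p x - q x) := integral_neg _
    rw [htotal] at hsplit2
    rw [← hsplit]
    rw [hneg] at hAc_le
    linarith
  -- value of the test integral
  set T : ℝ := (Real.cos (ω*μ₀' + -φ) + Real.cos (ω*μ₁' + -φ))
      - (Real.cos (ω*μ₀ + -φ) + Real.cos (ω*μ₁ + -φ)) with hT_def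
  have hval : ∫ x, gfun x * (p x - q x)
      = (1/2) * Real.exp (-(v:ℝ)*ω^2/2) * T := by
    have hpt : ∀ x, gfun x * (p x - q x)
        = (Real.cos (ω*x + -φ) * gaussianPDFReal μ₀' v x
            + Real.cos (ω*x + -φ) * gaussianPDFReal μ₁' v x)/2
          - (Real.cos (ω*x + -φ) * gaussianPDFReal μ₀ v x
            + Real.cos (ω*x + -φ) * gaussianPDFReal μ₁ v x)/2 := by
      intro x
      rw [hgfun_def, hp_def, hq_def]
      ring
    have I1 : Integrable (fun x => (Real.cos (ω*x + -φ) * gaussianPDFReal μ₀' v x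
        + Real.cos (ω*x + -φ) * gaussianPDFReal μ₁' v x)/2) :=
      ((hcos_int μ₀').add (hcos_int μ₁')).div_const 2
    have I2 : Integrable (fun x => (Real.cos (ω*x + -φ) * gaussianPDFReal μ₀ v x
        + Real.cos (ω*x + -φ) * gaussianPDFReal μ₁ v x)/2) :=
      ((hcos_int μ₀).add (hcos_int μ₁)).div_const 2
    rw [integral_congr_ae (Filter.Eventually.of_forall hpt)]
    rw [integral_sub I1 I2]
    rw [integral_div, integral_div,
      integral_add (hcos_int μ₀') (hcos_int μ₁'), integral_add (hcos_int μ₀) (hcos_int μ₁)]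
    rw [key_integral' ω (-φ) μ₀' hvpos, key_integral' ω (-φ) μ₁' hvpos,
      key_integral' ω (-φ) μ₀ hvpos, key_integral' ω (-φ) μ₁ hvpos]
    rw [hT_def]
    ring
  -- trig value of T
  have hTeq : T = 4 * Real.cos ((u-w)/4) * (Real.sin ((u+w+2*gg)/4) * Real.sin ((u+w)/4)) := by
    have a1 : ω*μ₀' + -φ = (u - w - 2*gg)/4 := by
      rw [hφ_def, hu_def, hw_def, hgg_def]; ring
    have a2 : ω*μ₁' + -φ = (u - w + 2*gg)/4 := by
      rw [hφ_def, hu_def, hw_def, hgg_def]; ring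
    have a3 : Real.cos (ω*μ₀ + -φ) = Real.cos ((3*u+w+2*gg)/4) := by
      rw [show ω*μ₀ + -φ = -((3*u+w+2*gg)/4) by rw [hφ_def]; ring, Real.cos_neg]
    have a4 : ω*μ₁ + -φ = (u+3*w+2*gg)/4 := by
      rw [hφ_def, hu_def, hw_def, hgg_def]; ring
    rw [hT_def, a1, a2, a3, a4]
    exact trigT u w gg
  have hTlow : (u+w+gg) * max u w / (2*π^2) ≤ T := by
    rw [hTeq]
    exact trig_lower u w gg hu0 hw0 hgg0 hXπ
  have hTlow0 : 0 ≤ (u+w+gg) * max u w / (2*π^2) := by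
    apply div_nonneg _ (by positivity)
    exact mul_nonneg (by linarith) (le_trans hu0 (le_max_left _ _))
  -- exponential bound
  have hE : Real.exp (-1) ≤ Real.exp (-(v:ℝ)*ω^2/2) := by
    apply Real.exp_le_exp.mpr
    have hvω : (v:ℝ)*ω^2 = π^2/10000 := by
      rw [hvR, hω_def]; field_simp; ring
    linarith [aux_pi_sq, hvω]
  -- final arithmetic
  have habs1 : max |μ₀ - μ₁| |μ₀' - μ₁'| = μ₁ - μ₀ := by
    rw [show |μ₀ - μ₁| = μ₁ - μ₀ by
        rw [abs_sub_comm]; exact abs_of_nonneg (by linarith),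
      show |μ₀' - μ₁'| = μ₁' - μ₀' by
        rw [abs_sub_comm]; exact abs_of_nonneg (by linarith)]
    exact max_eq_left (by linarith)
  have habs2 : max |μ₀' - μ₀| |μ₁ - μ₁'| = max (μ₀' - μ₀) (μ₁ - μ₁') := by
    rw [abs_of_nonneg (by linarith : (0:ℝ) ≤ μ₀' - μ₀),
      abs_of_nonneg (by linarith : (0:ℝ) ≤ μ₁ - μ₁')]
  have hmaxY : max u w = ω * max (μ₀' - μ₀) (μ₁ - μ₁') := by
    rw [hu_def, hw_def, mul_max_of_nonneg _ _ hωpos.le]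
  -- chain everything
  have hchain1 : (1/2) * ((1/2) * Real.exp (-(v:ℝ)*ω^2/2) * T) ≤ ∫ x in A, (p x - q x) := by
    rw [← hval]
    linarith
  have hchain2 : (1/4) * Real.exp (-1) * ((u+w+gg) * max u w / (2*π^2))
      ≤ (1/2) * ((1/2) * Real.exp (-(v:ℝ)*ω^2/2) * T) := by
    have hmm := mul_le_mul hE hTlow hTlow0 (Real.exp_pos _).le
    linarith
  have hfinal : π^2 * (μ₁ - μ₀) * max (μ₀' - μ₀) (μ₁ - μ₁') / (5120000 * Real.exp 1 * σ^2)
      ≤ (1/4) * Real.exp (-1) * ((u+w+gg) * max u w / (2*π^2)) := by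
    rw [Real.exp_neg, hXeq, hmaxY]
    set M : ℝ := max (μ₀' - μ₀) (μ₁ - μ₁') with hM_def
    have hM0 : 0 ≤ M := le_trans (by linarith) (le_max_left _ _)
    have hE1 := Real.exp_pos 1
    have hrhs : (1/4) * (Real.exp 1)⁻¹ * (ω*(μ₁-μ₀) * (ω*M) / (2*π^2))
        = (μ₁-μ₀)*M/(80000*Real.exp 1*σ^2) := by
      rw [hω_def]
      field_simp
      ring
    rw [hrhs, div_le_div_iff₀ (by positivity) (by positivity)]
    have hC : (0:ℝ) ≤ (μ₁-μ₀)*M*(Real.exp 1*σ^2) :=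
      mul_nonneg (mul_nonneg (by linarith) hM0) (mul_nonneg hE1.le (sq_nonneg σ))
    linarith [aux_num ((μ₁-μ₀)*M*(Real.exp 1*σ^2)) hC]
  rw [ge_iff_le, habs1, habs2]
  calc π^2 * (μ₁ - μ₀) * max (μ₀' - μ₀) (μ₁ - μ₁') / (5120000 * Real.exp 1 * σ^2)
      ≤ (1/4) * Real.exp (-1) * ((u+w+gg) * max u w / (2*π^2)) := hfinal
    _ ≤ (1/2) * ((1/2) * Real.exp (-(v:ℝ)*ω^2/2) * T) := hchain2
    _ ≤ ∫ x in A, (p x - q x) := hchain1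
    _ = ((mix1d μ₀ μ₁ σ) A).toReal - ((mix1d μ₀' μ₁' σ) A).toReal := e3.symm
    _ ≤ tvDist (mix1d μ₀ μ₁ σ) (mix1d μ₀' μ₁' σ) := hTV
end
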